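/- arXiv:1806.04940 — 4 statements merged into one kernel-verified Lean document; each statement's English description precedes it below -/
import Mathlib

section
/- (Type WL₁) For α, γ ∈ ℂ with α ≠ 0 and α ≠ 1, let A(α,γ) = ℂ⟨x,y,z⟩/(αxy − yx, αxz − γyx − zx, zy − yz + (1+γ)y²). For α', γ' ∈ ℂ with α' ≠ 0 and α' ≠ 1, the algebras A(α,γ) and A(α',γ') are isomorphic as graded algebras if and only if (α',γ') = (α,γ). -/
noncomputable section

/-- The free algebra `ℂ⟨x,y,z⟩`. -/
abbrev F3 : Type := FreeAlgebra ℂ (Fin 3)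

def X : F3 := FreeAlgebra.ι ℂ 0
def Y : F3 := FreeAlgebra.ι ℂ 1
def Z : F3 := FreeAlgebra.ι ℂ 2

/-- The relation identifying the three relators with `0`. -/
def rel3 (f₁ f₂ f₃ : F3) : F3 → F3 → Prop :=
  fun a b => (a = f₁ ∨ a = f₂ ∨ a = f₃) ∧ b = 0

/-- `ℂ⟨x,y,z⟩/(f₁,f₂,f₃)`, the quotient by the two-sided ideal generated by `f₁,f₂,f₃`. -/
abbrev QuadAlg (f₁ f₂ f₃ : F3) : Type := RingQuot (rel3 f₁ f₂ f₃)

/-- The linear span of the images of `x, y, z` in the quotient. -/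
def genSpan (f₁ f₂ f₃ : F3) : Submodule ℂ (QuadAlg f₁ f₂ f₃) :=
  Submodule.span ℂ {RingQuot.mkAlgHom ℂ (rel3 f₁ f₂ f₃) X,
                    RingQuot.mkAlgHom ℂ (rel3 f₁ f₂ f₃) Y,
                    RingQuot.mkAlgHom ℂ (rel3 f₁ f₂ f₃) Z}

/-- Isomorphism of graded algebras: a `ℂ`-algebra isomorphism carrying the span of
the images of `x,y,z` onto the span of the images of `x,y,z`. -/
def GrIso (f₁ f₂ f₃ g₁ g₂ g₃ : F3) : Prop :=
  ∃ e : QuadAlg f₁ f₂ f₃ ≃ₐ[ℂ] QuadAlg g₁ g₂ g₃,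
    Submodule.map e.toLinearMap (genSpan f₁ f₂ f₃) = genSpan g₁ g₂ g₃


lemma mem_span_triple {M : Type*} [AddCommGroup M] [Module ℂ M] {p q r v : M}
    (h : v ∈ Submodule.span ℂ ({p, q, r} : Set M)) :
    ∃ a b c : ℂ, v = a • p + b • q + c • r := by
  rw [Submodule.mem_span_insert] at h
  obtain ⟨a, w, hw, rfl⟩ := h
  rw [Submodule.mem_span_insert] at hw
  obtain ⟨b, u, hu, rfl⟩ := hw
  rw [Submodule.mem_span_singleton] at hu
  obtain ⟨c, rfl⟩ := hu
  exact ⟨a, b, c, by rw [add_assoc]⟩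

@[ext] structure Tr (B H : ℂ) where
  (c x y z xx xy xz yy yz zz : ℂ)

namespace Tr
variable {B H : ℂ}
instance instAdd : Add (Tr B H) := ⟨fun p q => ⟨p.c+q.c, p.x+q.x, p.y+q.y, p.z+q.z, p.xx+q.xx, p.xy+q.xy, p.xz+q.xz, p.yy+q.yy, p.yz+q.yz, p.zz+q.zz⟩⟩
instance instNeg : Neg (Tr B H) := ⟨fun p => ⟨-p.c, -p.x, -p.y, -p.z, -p.xx, -p.xy, -p.xz, -p.yy, -p.yz, -p.zz⟩⟩
instance instZero : Zero (Tr B H) := ⟨⟨0, 0, 0, 0, 0, 0, 0, 0, 0, 0⟩⟩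
instance instOne : One (Tr B H) := ⟨⟨1, 0, 0, 0, 0, 0, 0, 0, 0, 0⟩⟩
instance instSMul : SMul ℂ (Tr B H) := ⟨fun r p => ⟨r*p.c, r*p.x, r*p.y, r*p.z, r*p.xx, r*p.xy, r*p.xz, r*p.yy, r*p.yz, r*p.zz⟩⟩
instance instMul : Mul (Tr B H) := ⟨fun p q => ⟨p.c*q.c, p.c*q.x + q.c*p.x, p.c*q.y + q.c*p.y, p.c*q.z + q.c*p.z, p.c*q.xx + q.c*p.xx + p.x*q.x, p.c*q.xy + q.c*p.xy + p.x*q.y + B*(p.y*q.x) - H*B*(p.z*q.x), p.c*q.xz + q.c*p.xz + p.x*q.z + B*(p.z*q.x), p.c*q.yy + q.c*p.yy + p.y*q.y - (1+H)*(p.z*q.y), p.c*q.yz + q.c*p.yz + p.y*q.z + p.z*q.y, p.c*q.zz + q.c*p.zz + p.z*q.z⟩⟩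
@[simp] lemma add_c' (p q : Tr B H) : (p+q).c = p.c + q.c := rfl
@[simp] lemma neg_c' (p : Tr B H) : (-p).c = -p.c := rfl
@[simp] lemma zero_c' : (0 : Tr B H).c = 0 := rfl
@[simp] lemma one_c' : (1 : Tr B H).c = 1 := rfl
@[simp] lemma smul_c' (r : ℂ) (p : Tr B H) : (r • p).c = r * p.c := rfl
@[simp] lemma mul_c' (p q : Tr B H) : (p*q).c = p.c*q.c := rfl
@[simp] lemma add_x' (p q : Tr B H) : (p+q).x = p.x + q.x := rfl
@[simp] lemma neg_x' (p : Tr B H) : (-p).x = -p.x := rfl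
@[simp] lemma zero_x' : (0 : Tr B H).x = 0 := rfl
@[simp] lemma one_x' : (1 : Tr B H).x = 0 := rfl
@[simp] lemma smul_x' (r : ℂ) (p : Tr B H) : (r • p).x = r * p.x := rfl
@[simp] lemma mul_x' (p q : Tr B H) : (p*q).x = p.c*q.x + q.c*p.x := rfl
@[simp] lemma add_y' (p q : Tr B H) : (p+q).y = p.y + q.y := rfl
@[simp] lemma neg_y' (p : Tr B H) : (-p).y = -p.y := rfl
@[simp] lemma zero_y' : (0 : Tr B H).y = 0 := rfl
@[simp] lemma one_y' : (1 : Tr B H).y = 0 := rfl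
@[simp] lemma smul_y' (r : ℂ) (p : Tr B H) : (r • p).y = r * p.y := rfl
@[simp] lemma mul_y' (p q : Tr B H) : (p*q).y = p.c*q.y + q.c*p.y := rfl
@[simp] lemma add_z' (p q : Tr B H) : (p+q).z = p.z + q.z := rfl
@[simp] lemma neg_z' (p : Tr B H) : (-p).z = -p.z := rfl
@[simp] lemma zero_z' : (0 : Tr B H).z = 0 := rfl
@[simp] lemma one_z' : (1 : Tr B H).z = 0 := rfl
@[simp] lemma smul_z' (r : ℂ) (p : Tr B H) : (r • p).z = r * p.z := rfl
@[simp] lemma mul_z' (p q : Tr B H) : (p*q).z = p.c*q.z + q.c*p.z := rfl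
@[simp] lemma add_xx' (p q : Tr B H) : (p+q).xx = p.xx + q.xx := rfl
@[simp] lemma neg_xx' (p : Tr B H) : (-p).xx = -p.xx := rfl
@[simp] lemma zero_xx' : (0 : Tr B H).xx = 0 := rfl
@[simp] lemma one_xx' : (1 : Tr B H).xx = 0 := rfl
@[simp] lemma smul_xx' (r : ℂ) (p : Tr B H) : (r • p).xx = r * p.xx := rfl
@[simp] lemma mul_xx' (p q : Tr B H) : (p*q).xx = p.c*q.xx + q.c*p.xx + p.x*q.x := rfl
@[simp] lemma add_xy' (p q : Tr B H) : (p+q).xy = p.xy + q.xy := rfl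
@[simp] lemma neg_xy' (p : Tr B H) : (-p).xy = -p.xy := rfl
@[simp] lemma zero_xy' : (0 : Tr B H).xy = 0 := rfl
@[simp] lemma one_xy' : (1 : Tr B H).xy = 0 := rfl
@[simp] lemma smul_xy' (r : ℂ) (p : Tr B H) : (r • p).xy = r * p.xy := rfl
@[simp] lemma mul_xy' (p q : Tr B H) : (p*q).xy = p.c*q.xy + q.c*p.xy + p.x*q.y + B*(p.y*q.x) - H*B*(p.z*q.x) := rfl
@[simp] lemma add_xz' (p q : Tr B H) : (p+q).xz = p.xz + q.xz := rfl
@[simp] lemma neg_xz' (p : Tr B H) : (-p).xz = -p.xz := rfl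
@[simp] lemma zero_xz' : (0 : Tr B H).xz = 0 := rfl
@[simp] lemma one_xz' : (1 : Tr B H).xz = 0 := rfl
@[simp] lemma smul_xz' (r : ℂ) (p : Tr B H) : (r • p).xz = r * p.xz := rfl
@[simp] lemma mul_xz' (p q : Tr B H) : (p*q).xz = p.c*q.xz + q.c*p.xz + p.x*q.z + B*(p.z*q.x) := rfl
@[simp] lemma add_yy' (p q : Tr B H) : (p+q).yy = p.yy + q.yy := rfl
@[simp] lemma neg_yy' (p : Tr B H) : (-p).yy = -p.yy := rfl
@[simp] lemma zero_yy' : (0 : Tr B H).yy = 0 := rfl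
@[simp] lemma one_yy' : (1 : Tr B H).yy = 0 := rfl
@[simp] lemma smul_yy' (r : ℂ) (p : Tr B H) : (r • p).yy = r * p.yy := rfl
@[simp] lemma mul_yy' (p q : Tr B H) : (p*q).yy = p.c*q.yy + q.c*p.yy + p.y*q.y - (1+H)*(p.z*q.y) := rfl
@[simp] lemma add_yz' (p q : Tr B H) : (p+q).yz = p.yz + q.yz := rfl
@[simp] lemma neg_yz' (p : Tr B H) : (-p).yz = -p.yz := rfl
@[simp] lemma zero_yz' : (0 : Tr B H).yz = 0 := rfl
@[simp] lemma one_yz' : (1 : Tr B H).yz = 0 := rfl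
@[simp] lemma smul_yz' (r : ℂ) (p : Tr B H) : (r • p).yz = r * p.yz := rfl
@[simp] lemma mul_yz' (p q : Tr B H) : (p*q).yz = p.c*q.yz + q.c*p.yz + p.y*q.z + p.z*q.y := rfl
@[simp] lemma add_zz' (p q : Tr B H) : (p+q).zz = p.zz + q.zz := rfl
@[simp] lemma neg_zz' (p : Tr B H) : (-p).zz = -p.zz := rfl
@[simp] lemma zero_zz' : (0 : Tr B H).zz = 0 := rfl
@[simp] lemma one_zz' : (1 : Tr B H).zz = 0 := rfl
@[simp] lemma smul_zz' (r : ℂ) (p : Tr B H) : (r • p).zz = r * p.zz := rfl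
@[simp] lemma mul_zz' (p q : Tr B H) : (p*q).zz = p.c*q.zz + q.c*p.zz + p.z*q.z := rfl

instance instAddCommGroup : AddCommGroup (Tr B H) where
  add := (· + ·)
  zero := 0
  neg := (- ·)
  add_assoc := by intros; ext <;> simp <;> ring
  zero_add := by intros; ext <;> simp
  add_zero := by intros; ext <;> simp
  add_comm := by intros; ext <;> simp <;> ring
  neg_add_cancel := by intros; ext <;> simp
  nsmul := nsmulRec
  zsmul := zsmulRec

instance instRing : Ring (Tr B H) where
  __ := (instAddCommGroup : AddCommGroup (Tr B H))
  mul := (· * ·)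
  one := 1
  mul_assoc := by intros; ext <;> simp <;> ring
  one_mul := by intros; ext <;> simp
  mul_one := by intros; ext <;> simp
  left_distrib := by intros; ext <;> simp <;> ring
  right_distrib := by intros; ext <;> simp <;> ring
  zero_mul := by intros; ext <;> simp
  mul_zero := by intros; ext <;> simp

instance instModule : Module ℂ (Tr B H) where
  smul := (· • ·)
  one_smul := by intros; ext <;> simp
  mul_smul := by intros; ext <;> simp <;> ring
  smul_zero := by intros; ext <;> simp
  smul_add := by intros; ext <;> simp <;> ring
  zero_smul := by intros; ext <;> simp
  add_smul := by intros; ext <;> simp <;> ring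

@[simp] lemma sub_c' (p q : Tr B H) : (p-q).c = p.c - q.c := by rw [sub_eq_add_neg, sub_eq_add_neg]; simp
@[simp] lemma sub_x' (p q : Tr B H) : (p-q).x = p.x - q.x := by rw [sub_eq_add_neg, sub_eq_add_neg]; simp
@[simp] lemma sub_y' (p q : Tr B H) : (p-q).y = p.y - q.y := by rw [sub_eq_add_neg, sub_eq_add_neg]; simp
@[simp] lemma sub_z' (p q : Tr B H) : (p-q).z = p.z - q.z := by rw [sub_eq_add_neg, sub_eq_add_neg]; simp
@[simp] lemma sub_xx' (p q : Tr B H) : (p-q).xx = p.xx - q.xx := by rw [sub_eq_add_neg, sub_eq_add_neg]; simp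
@[simp] lemma sub_xy' (p q : Tr B H) : (p-q).xy = p.xy - q.xy := by rw [sub_eq_add_neg, sub_eq_add_neg]; simp
@[simp] lemma sub_xz' (p q : Tr B H) : (p-q).xz = p.xz - q.xz := by rw [sub_eq_add_neg, sub_eq_add_neg]; simp
@[simp] lemma sub_yy' (p q : Tr B H) : (p-q).yy = p.yy - q.yy := by rw [sub_eq_add_neg, sub_eq_add_neg]; simp
@[simp] lemma sub_yz' (p q : Tr B H) : (p-q).yz = p.yz - q.yz := by rw [sub_eq_add_neg, sub_eq_add_neg]; simp
@[simp] lemma sub_zz' (p q : Tr B H) : (p-q).zz = p.zz - q.zz := by rw [sub_eq_add_neg, sub_eq_add_neg]; simp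

lemma smul_mul (r : ℂ) (p q : Tr B H) : r • p * q = r • (p * q) := by
  ext <;> simp <;> ring

lemma mul_smul' (r : ℂ) (p q : Tr B H) : p * (r • q) = r • (p * q) := by
  ext <;> simp <;> ring

instance instAlgebra : Algebra ℂ (Tr B H) :=
  Algebra.ofModule smul_mul mul_smul'

end Tr


namespace Tr
variable (B H : ℂ)

def gx : Tr B H := ⟨0,1,0,0,0,0,0,0,0,0⟩
def gy : Tr B H := ⟨0,0,1,0,0,0,0,0,0,0⟩
def gz : Tr B H := ⟨0,0,0,1,0,0,0,0,0,0⟩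

def Φ₀ : F3 →ₐ[ℂ] Tr B H := FreeAlgebra.lift ℂ ![gx B H, gy B H, gz B H]

@[simp] lemma Φ₀_X : Φ₀ B H X = gx B H := by simp [Φ₀, X]
@[simp] lemma Φ₀_Y : Φ₀ B H Y = gy B H := by simp [Φ₀, Y]
@[simp] lemma Φ₀_Z : Φ₀ B H Z = gz B H := by simp [Φ₀, Z]

lemma Φ₀_rel1 : Φ₀ B H (B • (X*Y) - Y*X) = 0 := by
  simp only [map_sub, map_smul, map_mul, Φ₀_X, Φ₀_Y]
  ext <;> simp [gx, gy]

lemma Φ₀_rel2 : Φ₀ B H (B • (X*Z) - H • (Y*X) - Z*X) = 0 := by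
  simp only [map_sub, map_smul, map_mul, Φ₀_X, Φ₀_Y, Φ₀_Z]
  ext <;> simp [gx, gy, gz] <;> ring

lemma Φ₀_rel3 : Φ₀ B H (Z*Y - Y*Z + (1+H) • (Y*Y)) = 0 := by
  simp only [map_add, map_sub, map_smul, map_mul, Φ₀_Y, Φ₀_Z]
  ext <;> simp [gy, gz] <;> ring

/-- The induced hom on the quotient, for the primed relators. -/
def Φ : QuadAlg (B • (X*Y) - Y*X) (B • (X*Z) - H • (Y*X) - Z*X)
      (Z*Y - Y*Z + (1+H) • (Y*Y)) →ₐ[ℂ] Tr B H :=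
  RingQuot.liftAlgHom ℂ ⟨Φ₀ B H, by
    rintro a b ⟨(rfl | rfl | rfl), rfl⟩
    · simpa using Φ₀_rel1 B H
    · simpa using Φ₀_rel2 B H
    · simpa using Φ₀_rel3 B H⟩

@[simp] lemma Φ_X : Φ B H (RingQuot.mkAlgHom ℂ _ X) = gx B H := by
  simp [Φ, RingQuot.liftAlgHom_mkAlgHom_apply]

@[simp] lemma Φ_Y : Φ B H (RingQuot.mkAlgHom ℂ _ Y) = gy B H := by
  simp [Φ, RingQuot.liftAlgHom_mkAlgHom_apply]

@[simp] lemma Φ_Z : Φ B H (RingQuot.mkAlgHom ℂ _ Z) = gz B H := by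
  simp [Φ, RingQuot.liftAlgHom_mkAlgHom_apply]

end Tr


lemma key (A G B H a1 a2 a3 a4 a5 a6 a7 a8 a9 p1 p2 p3 q1 q2 q3 r1 r2 r3 : ℂ)
    (hA0 : A ≠ 0) (hA1 : A ≠ 1) (hB0 : B ≠ 0) (hB1 : B ≠ 1)
    (i1 : p1*a1 + p2*a4 + p3*a7 = 1)
    (i2 : p1*a2 + p2*a5 + p3*a8 = 0)
    (i3 : p1*a3 + p2*a6 + p3*a9 = 0)
    (i4 : q1*a1 + q2*a4 + q3*a7 = 0)
    (i5 : q1*a2 + q2*a5 + q3*a8 = 1)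
    (i6 : q1*a3 + q2*a6 + q3*a9 = 0)
    (i7 : r1*a1 + r2*a4 + r3*a7 = 0)
    (i8 : r1*a2 + r2*a5 + r3*a8 = 0)
    (i9 : r1*a3 + r2*a6 + r3*a9 = 1)
    (E1xx : A*(a1*a4) - (a4*a1) = 0)
    (E1xy : A*(a1*a5 + B*(a2*a4) - H*B*(a3*a4)) - (a4*a2 + B*(a5*a1) - H*B*(a6*a1)) = 0)
    (E1xz : A*(a1*a6 + B*(a3*a4)) - (a4*a3 + B*(a6*a1)) = 0)
    (E1yy : A*(a2*a5 - (1+H)*(a3*a5)) - (a5*a2 - (1+H)*(a6*a2)) = 0)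
    (E1yz : A*(a2*a6 + a3*a5) - (a5*a3 + a6*a2) = 0)
    (E1zz : A*(a3*a6) - (a6*a3) = 0)
    (E2xx : A*(a1*a7) - G*(a4*a1) - (a7*a1) = 0)
    (E2xy : A*(a1*a8 + B*(a2*a7) - H*B*(a3*a7)) - G*(a4*a2 + B*(a5*a1) - H*B*(a6*a1)) - (a7*a2 + B*(a8*a1) - H*B*(a9*a1)) = 0)
    (E2xz : A*(a1*a9 + B*(a3*a7)) - G*(a4*a3 + B*(a6*a1)) - (a7*a3 + B*(a9*a1)) = 0)
    (E2yy : A*(a2*a8 - (1+H)*(a3*a8)) - G*(a5*a2 - (1+H)*(a6*a2)) - (a8*a2 - (1+H)*(a9*a2)) = 0)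
    (E2yz : A*(a2*a9 + a3*a8) - G*(a5*a3 + a6*a2) - (a8*a3 + a9*a2) = 0)
    (E2zz : A*(a3*a9) - G*(a6*a3) - (a9*a3) = 0)
    (E3xx : a7*a4 - a4*a7 + (1+G)*(a4*a4) = 0)
    (E3xy : (a7*a5 + B*(a8*a4) - H*B*(a9*a4)) - (a4*a8 + B*(a5*a7) - H*B*(a6*a7)) + (1+G)*(a4*a5 + B*(a5*a4) - H*B*(a6*a4)) = 0)
    (E3xz : (a7*a6 + B*(a9*a4)) - (a4*a9 + B*(a6*a7)) + (1+G)*(a4*a6 + B*(a6*a4)) = 0)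
    (E3yy : (a8*a5 - (1+H)*(a9*a5)) - (a5*a8 - (1+H)*(a6*a8)) + (1+G)*(a5*a5 - (1+H)*(a6*a5)) = 0)
    (E3yz : (a8*a6 + a9*a5) - (a5*a9 + a6*a8) + (1+G)*(a5*a6 + a6*a5) = 0)
    (E3zz : a9*a6 - a6*a9 + (1+G)*(a6*a6) = 0)
    : B = A ∧ H = G := by
  have hA1' : A - 1 ≠ 0 := sub_ne_zero.mpr hA1
  -- invertibility
  have hdet : a1*(a5*a9 - a6*a8) - a2*(a4*a9 - a6*a7) + a3*(a4*a8 - a5*a7) ≠ 0 := by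
    have hmat : (Matrix.of ![![p1,p2,p3],![q1,q2,q3],![r1,r2,r3]]) *
        (Matrix.of ![![a1,a2,a3],![a4,a5,a6],![a7,a8,a9]]) = 1 := by
      ext i j
      fin_cases i <;> fin_cases j <;>
        simp [Matrix.mul_apply, Fin.sum_univ_three] <;>
        first
        | linear_combination i1 | linear_combination i2 | linear_combination i3
        | linear_combination i4 | linear_combination i5 | linear_combination i6
        | linear_combination i7 | linear_combination i8 | linear_combination i9
    intro h0
    have hd := congrArg Matrix.det hmat
    rw [Matrix.det_mul, Matrix.det_one] at hd
    rw [Matrix.det_fin_three, Matrix.det_fin_three] at hd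
    simp [Matrix.cons_val_zero, Matrix.cons_val_one, Matrix.head_cons,
      Matrix.cons_val_two, Matrix.tail_cons] at hd
    exact one_ne_zero (α := ℂ) (by
      linear_combination (-1 : ℂ)*hd +
        (p1*(q2*r3 - q3*r2) - p2*(q1*r3 - q3*r1) + p3*(q1*r2 - q2*r1))*h0)
  by_cases hG : G = -1
  case neg =>
    have h1G : (1:ℂ) + G ≠ 0 := fun h => hG (by linear_combination h)
    have ha4 : a4 = 0 := by
      have h2 : (1+G)*(a4*a4) = 0 := by linear_combination E3xx
      exact mul_self_eq_zero.mp ((mul_eq_zero.mp h2).resolve_left h1G)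
    have ha6 : a6 = 0 := by
      have h2 : (1+G)*(a6*a6) = 0 := by linear_combination E3zz
      exact mul_self_eq_zero.mp ((mul_eq_zero.mp h2).resolve_left h1G)
    subst ha4; subst ha6
    have ha5 : a5 ≠ 0 := by
      intro h5; exact hdet (by linear_combination (a1*a9 - a3*a7)*h5)
    have ha3 : a3 = 0 := by
      have h2 : (A-1)*(a3*a5) = 0 := by linear_combination E1yz
      rcases mul_eq_zero.mp ((mul_eq_zero.mp h2).resolve_left hA1') with h | h
      · exact h
      · exact absurd h ha5
    subst ha3
    have ha2 : a2 = 0 := by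
      have h2 : (A-1)*(a2*a5) = 0 := by linear_combination E1yy
      rcases mul_eq_zero.mp ((mul_eq_zero.mp h2).resolve_left hA1') with h | h
      · exact h
      · exact absurd h ha5
    subst ha2
    have ha1 : a1 ≠ 0 := by
      intro h1; exact hdet (by linear_combination (a5*a9)*h1)
    have ha9 : a9 ≠ 0 := by
      intro h9; exact hdet (by linear_combination (a1*a5)*h9)
    have ha7 : a7 = 0 := by
      have h2 : (A-1)*(a1*a7) = 0 := by linear_combination E2xx
      rcases mul_eq_zero.mp ((mul_eq_zero.mp h2).resolve_left hA1') with h | h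
      · exact absurd h ha1
      · exact h
    subst ha7
    have hBA : B = A := by
      have h2 : (A-B)*(a1*a5) = 0 := by linear_combination E1xy
      rcases mul_eq_zero.mp h2 with h | h
      · linear_combination -h
      · rcases mul_eq_zero.mp h with h | h
        · exact absurd h ha1
        · exact absurd h ha5
    refine ⟨hBA, ?_⟩
    have h2 : (A*a1)*(H*a9 - G*a5) = 0 := by
      linear_combination E2xy + (a1*a8 + G*a1*a5 - H*a1*a9)*hBA
    have h3 : H*a9 - G*a5 = 0 :=
      (mul_eq_zero.mp h2).resolve_left (mul_ne_zero hA0 ha1)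
    have h4 : a5*((1+H)*a9 - (1+G)*a5) = 0 := by linear_combination (-1:ℂ)*E3yy
    have h5 : (1+H)*a9 - (1+G)*a5 = 0 := (mul_eq_zero.mp h4).resolve_left ha5
    have h95 : a9 = a5 := by linear_combination h5 - h3
    have h6 : (H - G)*a5 = 0 := by linear_combination h3 - H*h95
    rcases mul_eq_zero.mp h6 with h | h
    · linear_combination h
    · exact absurd h ha5
  case pos =>
    subst hG
    by_cases ha1 : a1 = 0
    · subst ha1
      exfalso
      by_cases ha3 : a3 = 0
      · subst ha3
        have ha2 : a2 ≠ 0 := by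
          intro h2; exact hdet (by linear_combination (-(a4*a9) + a6*a7)*h2)
        have ha6 : a6 = 0 := by
          have h2 : (A-1)*(a2*a6) = 0 := by linear_combination E1yz
          rcases mul_eq_zero.mp ((mul_eq_zero.mp h2).resolve_left hA1') with h | h
          · exact absurd h ha2
          · exact h
        subst ha6
        have ha5 : a5 = 0 := by
          have h2 : (A-1)*(a2*a5) = 0 := by linear_combination E1yy
          rcases mul_eq_zero.mp ((mul_eq_zero.mp h2).resolve_left hA1') with h | h
          · exact absurd h ha2
          · exact h
        subst ha5
        have ha4 : a4 ≠ 0 := by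
          intro h4; exact hdet (by linear_combination (-(a2*a9))*h4)
        have hAB : A*B = 1 := by
          have h2 : (A*B - 1)*(a2*a4) = 0 := by linear_combination E1xy
          rcases mul_eq_zero.mp h2 with h | h
          · linear_combination h
          · exact absurd h (mul_ne_zero ha2 ha4)
        have h3 : a2*a4 = 0 := by linear_combination E2xy - (a2*a7)*hAB
        exact (mul_ne_zero ha2 ha4) h3
      · have ha6 : a6 = 0 := by
          have h2 : (A-1)*(a3*a6) = 0 := by linear_combination E1zz
          rcases mul_eq_zero.mp ((mul_eq_zero.mp h2).resolve_left hA1') with h | h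
          · exact absurd h ha3
          · exact h
        subst ha6
        have ha9 : a9 = 0 := by
          have h2 : (A-1)*(a3*a9) = 0 := by linear_combination E2zz
          rcases mul_eq_zero.mp ((mul_eq_zero.mp h2).resolve_left hA1') with h | h
          · exact absurd h ha3
          · exact h
        subst ha9
        have ha5 : a5 = 0 := by
          have h2 : (A-1)*(a3*a5) = 0 := by linear_combination E1yz
          rcases mul_eq_zero.mp ((mul_eq_zero.mp h2).resolve_left hA1') with h | h
          · exact absurd h ha3
          · exact h
        subst ha5
        have ha4 : a4 ≠ 0 := by
          intro h4; exact hdet (by linear_combination (a3*a8)*h4)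
        have hAB : A*B = 1 := by
          have h2 : (A*B - 1)*(a3*a4) = 0 := by linear_combination E1xz
          rcases mul_eq_zero.mp h2 with h | h
          · linear_combination h
          · exact absurd h (mul_ne_zero ha3 ha4)
        have h3 : a3*a4 = 0 := by linear_combination E2xz - (a3*a7)*hAB
        exact (mul_ne_zero ha3 ha4) h3
    · have ha4 : a4 = 0 := by
        have h2 : (A-1)*(a1*a4) = 0 := by linear_combination E1xx
        rcases mul_eq_zero.mp ((mul_eq_zero.mp h2).resolve_left hA1') with h | h
        · exact absurd h ha1
        · exact h
      subst ha4
      have ha7 : a7 = 0 := by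
        have h2 : (A-1)*(a1*a7) = 0 := by linear_combination E2xx
        rcases mul_eq_zero.mp ((mul_eq_zero.mp h2).resolve_left hA1') with h | h
        · exact absurd h ha1
        · exact h
      subst ha7
      have ha3 : a3 = 0 := by
        by_cases h3 : a3 = 0
        · exact h3
        exfalso
        have ha6 : a6 = 0 := by
          have h2 : (A-1)*(a3*a6) = 0 := by linear_combination E1zz
          rcases mul_eq_zero.mp ((mul_eq_zero.mp h2).resolve_left hA1') with h | h
          · exact absurd h h3
          · exact h
        have ha9 : a9 = 0 := by
          have h2 : (A-1)*(a3*a9) = 0 := by linear_combination E2zz - a3*ha6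
          rcases mul_eq_zero.mp ((mul_eq_zero.mp h2).resolve_left hA1') with h | h
          · exact absurd h h3
          · exact h
        exact hdet (by linear_combination (a1*a5)*ha9 - (a1*a8)*ha6)
      subst ha3
      have ha2 : a2 = 0 := by
        by_cases h2 : a2 = 0
        · exact h2
        exfalso
        have ha6 : a6 = 0 := by
          have hq : (A-1)*(a2*a6) = 0 := by linear_combination E1yz
          rcases mul_eq_zero.mp ((mul_eq_zero.mp hq).resolve_left hA1') with h | h
          · exact absurd h h2
          · exact h
        have ha9 : a9 = 0 := by
          have hq : (A-1)*(a2*a9) = 0 := by linear_combination E2yz - a2*ha6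
          rcases mul_eq_zero.mp ((mul_eq_zero.mp hq).resolve_left hA1') with h | h
          · exact absurd h h2
          · exact h
        exact hdet (by linear_combination (a1*a5)*ha9 - (a1*a8)*ha6)
      subst ha2
      have hH : H = -1 := by
        have h2 : (1+H)*(a6*a8 - a9*a5) = 0 := by linear_combination E3yy
        rcases mul_eq_zero.mp h2 with h | h
        · linear_combination h
        · exact (hdet (by linear_combination (-a1)*h)).elim
      refine ⟨?_, hH⟩
      by_cases hB : B = A
      · exact hB
      exfalso
      have hABne : A - B ≠ 0 := sub_ne_zero.mpr fun h => hB h.symm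
      have ha6 : a6 = 0 := by
        have h2 : (A-B)*(a1*a6) = 0 := by linear_combination E1xz
        rcases mul_eq_zero.mp ((mul_eq_zero.mp h2).resolve_left hABne) with h | h
        · exact absurd h ha1
        · exact h
      have ha5 : a5 = 0 := by
        have h2 : (A-B)*(a1*a5) = 0 := by linear_combination E1xy - H*B*a1*ha6
        rcases mul_eq_zero.mp ((mul_eq_zero.mp h2).resolve_left hABne) with h | h
        · exact absurd h ha1
        · exact h
      exact hdet (by linear_combination (a1*a9)*ha5 - (a1*a8)*ha6)

set_option maxHeartbeats 1000000 in
theorem typeWL1_iso_iff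
    (α γ α' γ' : ℂ)
    (h0 : α ≠ 0)
    (h1 : α ≠ 1)
    (h0' : α' ≠ 0)
    (h1' : α' ≠ 1)
    : GrIso
      (α • (X*Y) - Y*X)
      (α • (X*Z) - γ • (Y*X) - Z*X)
      (Z*Y - Y*Z + (1+γ) • (Y*Y))
      (α' • (X*Y) - Y*X)
      (α' • (X*Z) - γ' • (Y*X) - Z*X)
      (Z*Y - Y*Z + (1+γ') • (Y*Y))
      ↔
      (α' = α ∧ γ' = γ) := by
  constructor
  · rintro ⟨e, hspan⟩
    have hxmem : (RingQuot.mkAlgHom ℂ (rel3 (α • (X*Y) - Y*X) (α • (X*Z) - γ • (Y*X) - Z*X) (Z*Y - Y*Z + (1+γ) • (Y*Y))) X) ∈ genSpan (α • (X*Y) - Y*X) (α • (X*Z) - γ • (Y*X) - Z*X) (Z*Y - Y*Z + (1+γ) • (Y*Y)) := Submodule.subset_span (Set.mem_insert _ _)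
    have hymem : (RingQuot.mkAlgHom ℂ (rel3 (α • (X*Y) - Y*X) (α • (X*Z) - γ • (Y*X) - Z*X) (Z*Y - Y*Z + (1+γ) • (Y*Y))) Y) ∈ genSpan (α • (X*Y) - Y*X) (α • (X*Z) - γ • (Y*X) - Z*X) (Z*Y - Y*Z + (1+γ) • (Y*Y)) :=
      Submodule.subset_span (Set.mem_insert_of_mem _ (Set.mem_insert _ _))
    have hzmem : (RingQuot.mkAlgHom ℂ (rel3 (α • (X*Y) - Y*X) (α • (X*Z) - γ • (Y*X) - Z*X) (Z*Y - Y*Z + (1+γ) • (Y*Y))) Z) ∈ genSpan (α • (X*Y) - Y*X) (α • (X*Z) - γ • (Y*X) - Z*X) (Z*Y - Y*Z + (1+γ) • (Y*Y)) :=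
      Submodule.subset_span (Set.mem_insert_of_mem _ (Set.mem_insert_of_mem _ rfl))
    have hex : e (RingQuot.mkAlgHom ℂ (rel3 (α • (X*Y) - Y*X) (α • (X*Z) - γ • (Y*X) - Z*X) (Z*Y - Y*Z + (1+γ) • (Y*Y))) X) ∈ genSpan (α' • (X*Y) - Y*X) (α' • (X*Z) - γ' • (Y*X) - Z*X) (Z*Y - Y*Z + (1+γ') • (Y*Y)) := by
      rw [← hspan]; exact Submodule.mem_map_of_mem hxmem
    have hey : e (RingQuot.mkAlgHom ℂ (rel3 (α • (X*Y) - Y*X) (α • (X*Z) - γ • (Y*X) - Z*X) (Z*Y - Y*Z + (1+γ) • (Y*Y))) Y) ∈ genSpan (α' • (X*Y) - Y*X) (α' • (X*Z) - γ' • (Y*X) - Z*X) (Z*Y - Y*Z + (1+γ') • (Y*Y)) := by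
      rw [← hspan]; exact Submodule.mem_map_of_mem hymem
    have hez : e (RingQuot.mkAlgHom ℂ (rel3 (α • (X*Y) - Y*X) (α • (X*Z) - γ • (Y*X) - Z*X) (Z*Y - Y*Z + (1+γ) • (Y*Y))) Z) ∈ genSpan (α' • (X*Y) - Y*X) (α' • (X*Z) - γ' • (Y*X) - Z*X) (Z*Y - Y*Z + (1+γ') • (Y*Y)) := by
      rw [← hspan]; exact Submodule.mem_map_of_mem hzmem
    obtain ⟨a1, a2, a3, hEx⟩ := mem_span_triple hex
    obtain ⟨a4, a5, a6, hEy⟩ := mem_span_triple hey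
    obtain ⟨a7, a8, a9, hEz⟩ := mem_span_triple hez
    have hxb : (RingQuot.mkAlgHom ℂ (rel3 (α' • (X*Y) - Y*X) (α' • (X*Z) - γ' • (Y*X) - Z*X) (Z*Y - Y*Z + (1+γ') • (Y*Y))) X) ∈ Submodule.map e.toLinearMap (genSpan (α • (X*Y) - Y*X) (α • (X*Z) - γ • (Y*X) - Z*X) (Z*Y - Y*Z + (1+γ) • (Y*Y))) := by
      rw [hspan]; exact Submodule.subset_span (Set.mem_insert _ _)
    have hyb : (RingQuot.mkAlgHom ℂ (rel3 (α' • (X*Y) - Y*X) (α' • (X*Z) - γ' • (Y*X) - Z*X) (Z*Y - Y*Z + (1+γ') • (Y*Y))) Y) ∈ Submodule.map e.toLinearMap (genSpan (α • (X*Y) - Y*X) (α • (X*Z) - γ • (Y*X) - Z*X) (Z*Y - Y*Z + (1+γ) • (Y*Y))) := by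
      rw [hspan]; exact Submodule.subset_span (Set.mem_insert_of_mem _ (Set.mem_insert _ _))
    have hzb : (RingQuot.mkAlgHom ℂ (rel3 (α' • (X*Y) - Y*X) (α' • (X*Z) - γ' • (Y*X) - Z*X) (Z*Y - Y*Z + (1+γ') • (Y*Y))) Z) ∈ Submodule.map e.toLinearMap (genSpan (α • (X*Y) - Y*X) (α • (X*Z) - γ • (Y*X) - Z*X) (Z*Y - Y*Z + (1+γ) • (Y*Y))) := by
      rw [hspan]
      exact Submodule.subset_span (Set.mem_insert_of_mem _ (Set.mem_insert_of_mem _ rfl))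
    rw [Submodule.mem_map] at hxb hyb hzb
    obtain ⟨ux, hux, heux⟩ := hxb
    obtain ⟨uy, huy, heuy⟩ := hyb
    obtain ⟨uz, huz, heuz⟩ := hzb
    obtain ⟨p1, p2, p3, hux3⟩ := mem_span_triple hux
    obtain ⟨q1, q2, q3, huy3⟩ := mem_span_triple huy
    obtain ⟨r1, r2, r3, huz3⟩ := mem_span_triple huz
    have hx'e : (RingQuot.mkAlgHom ℂ (rel3 (α' • (X*Y) - Y*X) (α' • (X*Z) - γ' • (Y*X) - Z*X) (Z*Y - Y*Z + (1+γ') • (Y*Y))) X) = p1 • e (RingQuot.mkAlgHom ℂ (rel3 (α • (X*Y) - Y*X) (α • (X*Z) - γ • (Y*X) - Z*X) (Z*Y - Y*Z + (1+γ) • (Y*Y))) X) + p2 • e (RingQuot.mkAlgHom ℂ (rel3 (α • (X*Y) - Y*X) (α • (X*Z) - γ • (Y*X) - Z*X) (Z*Y - Y*Z + (1+γ) • (Y*Y))) Y) + p3 • e (RingQuot.mkAlgHom ℂ (rel3 (α • (X*Y) - Y*X) (α • (X*Z) - γ • (Y*X) - Z*X) (Z*Y - Y*Z + (1+γ) • (Y*Y)))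 Z) := by
      rw [← heux, hux3]
      simp [map_add, map_smul, AlgEquiv.toLinearMap_apply]
    have hy'e : (RingQuot.mkAlgHom ℂ (rel3 (α' • (X*Y) - Y*X) (α' • (X*Z) - γ' • (Y*X) - Z*X) (Z*Y - Y*Z + (1+γ') • (Y*Y))) Y) = q1 • e (RingQuot.mkAlgHom ℂ (rel3 (α • (X*Y) - Y*X) (α • (X*Z) - γ • (Y*X) - Z*X) (Z*Y - Y*Z + (1+γ) • (Y*Y))) X) + q2 • e (RingQuot.mkAlgHom ℂ (rel3 (α • (X*Y) - Y*X) (α • (X*Z) - γ • (Y*X) - Z*X) (Z*Y - Y*Z + (1+γ) • (Y*Y))) Y) + q3 • e (RingQuot.mkAlgHom ℂ (rel3 (α • (X*Y) - Y*X) (α • (X*Z) - γ • (Y*X) - Z*X) (Z*Y - Y*Z + (1+γ) • (Y*Y))) Z) := by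
      rw [← heuy, huy3]
      simp [map_add, map_smul, AlgEquiv.toLinearMap_apply]
    have hz'e : (RingQuot.mkAlgHom ℂ (rel3 (α' • (X*Y) - Y*X) (α' • (X*Z) - γ' • (Y*X) - Z*X) (Z*Y - Y*Z + (1+γ') • (Y*Y))) Z) = r1 • e (RingQuot.mkAlgHom ℂ (rel3 (α • (X*Y) - Y*X) (α • (X*Z) - γ • (Y*X) - Z*X) (Z*Y - Y*Z + (1+γ) • (Y*Y))) X) + r2 • e (RingQuot.mkAlgHom ℂ (rel3 (α • (X*Y) - Y*X) (α • (X*Z) - γ • (Y*X) - Z*X) (Z*Y - Y*Z + (1+γ) • (Y*Y))) Y) + r3 • e (RingQuot.mkAlgHom ℂ (rel3 (α • (X*Y) - Y*X) (α • (X*Z) - γ • (Y*X) - Z*X) (Z*Y - Y*Z + (1+γ) • (Y*Y))) Z) := by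
      rw [← heuz, huz3]
      simp [map_add, map_smul, AlgEquiv.toLinearMap_apply]
    have hPX : (Tr.Φ α' γ') (e (RingQuot.mkAlgHom ℂ (rel3 (α • (X*Y) - Y*X) (α • (X*Z) - γ • (Y*X) - Z*X) (Z*Y - Y*Z + (1+γ) • (Y*Y))) X)) = (a1 • Tr.gx α' γ' + a2 • Tr.gy α' γ' + a3 • Tr.gz α' γ') := by
      rw [hEx]; simp only [map_add, map_smul, Tr.Φ_X, Tr.Φ_Y, Tr.Φ_Z]
    have hPY : (Tr.Φ α' γ') (e (RingQuot.mkAlgHom ℂ (rel3 (α • (X*Y) - Y*X) (α • (X*Z) - γ • (Y*X) - Z*X) (Z*Y - Y*Z + (1+γ) • (Y*Y))) Y)) = (a4 • Tr.gx α' γ' + a5 • Tr.gy α' γ' + a6 • Tr.gz α' γ') := by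
      rw [hEy]; simp only [map_add, map_smul, Tr.Φ_X, Tr.Φ_Y, Tr.Φ_Z]
    have hPZ : (Tr.Φ α' γ') (e (RingQuot.mkAlgHom ℂ (rel3 (α • (X*Y) - Y*X) (α • (X*Z) - γ • (Y*X) - Z*X) (Z*Y - Y*Z + (1+γ) • (Y*Y))) Z)) = (a7 • Tr.gx α' γ' + a8 • Tr.gy α' γ' + a9 • Tr.gz α' γ') := by
      rw [hEz]; simp only [map_add, map_smul, Tr.Φ_X, Tr.Φ_Y, Tr.Φ_Z]
    have HX : Tr.gx α' γ' = p1 • (a1 • Tr.gx α' γ' + a2 • Tr.gy α' γ' + a3 • Tr.gz α' γ') + p2 • (a4 • Tr.gx α' γ' + a5 • Tr.gy α' γ' + a6 • Tr.gz α' γ') + p3 • (a7 • Tr.gx α' γ' + a8 • Tr.gy α' γ' + a9 • Tr.gz α' γ') := by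
      have h := congrArg (⇑(Tr.Φ α' γ')) hx'e
      simp only [map_add, map_smul] at h
      rw [hPX, hPY, hPZ] at h
      rw [← h]
      exact (Tr.Φ_X α' γ').symm
    have HY : Tr.gy α' γ' = q1 • (a1 • Tr.gx α' γ' + a2 • Tr.gy α' γ' + a3 • Tr.gz α' γ') + q2 • (a4 • Tr.gx α' γ' + a5 • Tr.gy α' γ' + a6 • Tr.gz α' γ') + q3 • (a7 • Tr.gx α' γ' + a8 • Tr.gy α' γ' + a9 • Tr.gz α' γ') := by
      have h := congrArg (⇑(Tr.Φ α' γ')) hy'e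
      simp only [map_add, map_smul] at h
      rw [hPX, hPY, hPZ] at h
      rw [← h]
      exact (Tr.Φ_Y α' γ').symm
    have HZ : Tr.gz α' γ' = r1 • (a1 • Tr.gx α' γ' + a2 • Tr.gy α' γ' + a3 • Tr.gz α' γ') + r2 • (a4 • Tr.gx α' γ' + a5 • Tr.gy α' γ' + a6 • Tr.gz α' γ') + r3 • (a7 • Tr.gx α' γ' + a8 • Tr.gy α' γ' + a9 • Tr.gz α' γ') := by
      have h := congrArg (⇑(Tr.Φ α' γ')) hz'e
      simp only [map_add, map_smul] at h
      rw [hPX, hPY, hPZ] at h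
      rw [← h]
      exact (Tr.Φ_Z α' γ').symm
    have hrel1 : α • ((RingQuot.mkAlgHom ℂ (rel3 (α • (X*Y) - Y*X) (α • (X*Z) - γ • (Y*X) - Z*X) (Z*Y - Y*Z + (1+γ) • (Y*Y))) X)*(RingQuot.mkAlgHom ℂ (rel3 (α • (X*Y) - Y*X) (α • (X*Z) - γ • (Y*X) - Z*X) (Z*Y - Y*Z + (1+γ) • (Y*Y))) Y)) - (RingQuot.mkAlgHom ℂ (rel3 (α • (X*Y) - Y*X) (α • (X*Z) - γ • (Y*X) - Z*X) (Z*Y - Y*Z + (1+γ) • (Y*Y))) Y)*(RingQuot.mkAlgHom ℂ (rel3 (α • (X*Y) - Y*X) (α • (X*Z) - γ • (Y*X) - Z*X) (Z*Y - Y*Z + (1+γ) • (Y*Y))) X) = 0 := by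
      have h := RingQuot.mkAlgHom_rel (s := rel3 (α • (X*Y) - Y*X) (α • (X*Z) - γ • (Y*X) - Z*X) (Z*Y - Y*Z + (1+γ) • (Y*Y))) ℂ
        (⟨Or.inl rfl, rfl⟩ : rel3 (α • (X*Y) - Y*X) (α • (X*Z) - γ • (Y*X) - Z*X) (Z*Y - Y*Z + (1+γ) • (Y*Y)) (α • (X*Y) - Y*X) 0)
      simpa only [map_sub, map_smul, map_mul, map_zero] using h
    have hrel2 : α • ((RingQuot.mkAlgHom ℂ (rel3 (α • (X*Y) - Y*X) (α • (X*Z) - γ • (Y*X) - Z*X) (Z*Y - Y*Z + (1+γ) • (Y*Y))) X)*(RingQuot.mkAlgHom ℂ (rel3 (α • (X*Y) - Y*X) (α • (X*Z) - γ • (Y*X) - Z*X) (Z*Y - Y*Z + (1+γ) • (Y*Y))) Z)) - γ • ((RingQuot.mkAlgHom ℂ (rel3 (α • (X*Y) - Y*X) (α • (X*Z) - γ • (Y*X) - Z*X) (Z*Y - Y*Z + (1+γ) • (Y*Y))) Y)*(RingQuot.mkAlgHom ℂ (rel3 (α • (X*Y) - Y*X) (α • (X*Z) - γ • (Y*X)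 - Z*X) (Z*Y - Y*Z + (1+γ) • (Y*Y))) X)) - (RingQuot.mkAlgHom ℂ (rel3 (α • (X*Y) - Y*X) (α • (X*Z) - γ • (Y*X) - Z*X) (Z*Y - Y*Z + (1+γ) • (Y*Y))) Z)*(RingQuot.mkAlgHom ℂ (rel3 (α • (X*Y) - Y*X) (α • (X*Z) - γ • (Y*X) - Z*X) (Z*Y - Y*Z + (1+γ) • (Y*Y))) X) = 0 := by
      have h := RingQuot.mkAlgHom_rel (s := rel3 (α • (X*Y) - Y*X) (α • (X*Z) - γ • (Y*X) - Z*X) (Z*Y - Y*Z + (1+γ) • (Y*Y))) ℂ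
        (⟨Or.inr (Or.inl rfl), rfl⟩ : rel3 (α • (X*Y) - Y*X) (α • (X*Z) - γ • (Y*X) - Z*X) (Z*Y - Y*Z + (1+γ) • (Y*Y)) (α • (X*Z) - γ • (Y*X) - Z*X) 0)
      simpa only [map_sub, map_smul, map_mul, map_zero] using h
    have hrel3 : (RingQuot.mkAlgHom ℂ (rel3 (α • (X*Y) - Y*X) (α • (X*Z) - γ • (Y*X) - Z*X) (Z*Y - Y*Z + (1+γ) • (Y*Y))) Z)*(RingQuot.mkAlgHom ℂ (rel3 (α • (X*Y) - Y*X) (α • (X*Z) - γ • (Y*X) - Z*X) (Z*Y - Y*Z + (1+γ) • (Y*Y))) Y) - (RingQuot.mkAlgHom ℂ (rel3 (α • (X*Y) - Y*X) (α • (X*Z) - γ • (Y*X) - Z*X) (Z*Y - Y*Z + (1+γ) • (Y*Y))) Y)*(RingQuot.mkAlgHom ℂ (rel3 (α • (X*Y) - Y*X) (α • (X*Z) - γ • (Y*X) - Z*X) (Z*Y - Y*Z + (1+γ) • (Y*Y))) Z) + (1+γ) • ((RingQuot.mkAlgHom ℂ (rel3 (α • (X*Y) - Y*X) (α • (X*Z)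 - γ • (Y*X) - Z*X) (Z*Y - Y*Z + (1+γ) • (Y*Y))) Y)*(RingQuot.mkAlgHom ℂ (rel3 (α • (X*Y) - Y*X) (α • (X*Z) - γ • (Y*X) - Z*X) (Z*Y - Y*Z + (1+γ) • (Y*Y))) Y)) = 0 := by
      have h := RingQuot.mkAlgHom_rel (s := rel3 (α • (X*Y) - Y*X) (α • (X*Z) - γ • (Y*X) - Z*X) (Z*Y - Y*Z + (1+γ) • (Y*Y))) ℂ
        (⟨Or.inr (Or.inr rfl), rfl⟩ : rel3 (α • (X*Y) - Y*X) (α • (X*Z) - γ • (Y*X) - Z*X) (Z*Y - Y*Z + (1+γ) • (Y*Y)) (Z*Y - Y*Z + (1+γ) • (Y*Y)) 0)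
      simpa only [map_add, map_sub, map_smul, map_mul, map_zero] using h
    have T1 : α • ((a1 • Tr.gx α' γ' + a2 • Tr.gy α' γ' + a3 • Tr.gz α' γ') * (a4 • Tr.gx α' γ' + a5 • Tr.gy α' γ' + a6 • Tr.gz α' γ')) - (a4 • Tr.gx α' γ' + a5 • Tr.gy α' γ' + a6 • Tr.gz α' γ') * (a1 • Tr.gx α' γ' + a2 • Tr.gy α' γ' + a3 • Tr.gz α' γ') = (0 : Tr α' γ') := by
      have h := congrArg (⇑(Tr.Φ α' γ')) (congrArg (⇑e) hrel1)
      simp only [map_sub, map_smul, map_mul, map_zero] at h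
      rw [hPX, hPY] at h
      exact h
    have T2 : α • ((a1 • Tr.gx α' γ' + a2 • Tr.gy α' γ' + a3 • Tr.gz α' γ') * (a7 • Tr.gx α' γ' + a8 • Tr.gy α' γ' + a9 • Tr.gz α' γ')) - γ • ((a4 • Tr.gx α' γ' + a5 • Tr.gy α' γ' + a6 • Tr.gz α' γ') * (a1 • Tr.gx α' γ' + a2 • Tr.gy α' γ' + a3 • Tr.gz α' γ')) - (a7 • Tr.gx α' γ' + a8 • Tr.gy α' γ' + a9 • Tr.gz α' γ') * (a1 • Tr.gx α' γ' + a2 • Tr.gy α' γ' + a3 • Tr.gz α' γ') = (0 : Tr α' γ') := by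
      have h := congrArg (⇑(Tr.Φ α' γ')) (congrArg (⇑e) hrel2)
      simp only [map_sub, map_smul, map_mul, map_zero] at h
      rw [hPX, hPY, hPZ] at h
      exact h
    have T3 : (a7 • Tr.gx α' γ' + a8 • Tr.gy α' γ' + a9 • Tr.gz α' γ') * (a4 • Tr.gx α' γ' + a5 • Tr.gy α' γ' + a6 • Tr.gz α' γ') - (a4 • Tr.gx α' γ' + a5 • Tr.gy α' γ' + a6 • Tr.gz α' γ') * (a7 • Tr.gx α' γ' + a8 • Tr.gy α' γ' + a9 • Tr.gz α' γ') + (1+γ) • ((a4 • Tr.gx α' γ' + a5 • Tr.gy α' γ' + a6 • Tr.gz α' γ') * (a4 • Tr.gx α' γ' + a5 • Tr.gy α' γ' + a6 • Tr.gz α' γ')) = (0 : Tr α' γ') := by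
      have h := congrArg (⇑(Tr.Φ α' γ')) (congrArg (⇑e) hrel3)
      simp only [map_add, map_sub, map_smul, map_mul, map_zero] at h
      rw [hPY, hPZ] at h
      exact h
    clear hPX hPY hPZ hx'e hy'e hz'e hEx hEy hEz hrel1 hrel2 hrel3
    clear hex hey hez hxmem hymem hzmem hux huy huz heux heuy heuz hux3 huy3 huz3
    have i1 : p1*a1 + p2*a4 + p3*a7 = 1 := by
      have h := congrArg Tr.x HX
      simp [Tr.gx, Tr.gy, Tr.gz] at h
      first
      | linear_combination h
      | linear_combination -h
    have i2 : p1*a2 + p2*a5 + p3*a8 = 0 := by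
      have h := congrArg Tr.y HX
      simp [Tr.gx, Tr.gy, Tr.gz] at h
      first
      | linear_combination h
      | linear_combination -h
    have i3 : p1*a3 + p2*a6 + p3*a9 = 0 := by
      have h := congrArg Tr.z HX
      simp [Tr.gx, Tr.gy, Tr.gz] at h
      first
      | linear_combination h
      | linear_combination -h
    have i4 : q1*a1 + q2*a4 + q3*a7 = 0 := by
      have h := congrArg Tr.x HY
      simp [Tr.gx, Tr.gy, Tr.gz] at h
      first
      | linear_combination h
      | linear_combination -h
    have i5 : q1*a2 + q2*a5 + q3*a8 = 1 := by
      have h := congrArg Tr.y HY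
      simp [Tr.gx, Tr.gy, Tr.gz] at h
      first
      | linear_combination h
      | linear_combination -h
    have i6 : q1*a3 + q2*a6 + q3*a9 = 0 := by
      have h := congrArg Tr.z HY
      simp [Tr.gx, Tr.gy, Tr.gz] at h
      first
      | linear_combination h
      | linear_combination -h
    have i7 : r1*a1 + r2*a4 + r3*a7 = 0 := by
      have h := congrArg Tr.x HZ
      simp [Tr.gx, Tr.gy, Tr.gz] at h
      first
      | linear_combination h
      | linear_combination -h
    have i8 : r1*a2 + r2*a5 + r3*a8 = 0 := by
      have h := congrArg Tr.y HZ
      simp [Tr.gx, Tr.gy, Tr.gz] at h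
      first
      | linear_combination h
      | linear_combination -h
    have i9 : r1*a3 + r2*a6 + r3*a9 = 1 := by
      have h := congrArg Tr.z HZ
      simp [Tr.gx, Tr.gy, Tr.gz] at h
      first
      | linear_combination h
      | linear_combination -h
    have E1xx : α*(a1*a4) - (a4*a1) = 0 := by
      have h := congrArg Tr.xx T1
      simp [Tr.gx, Tr.gy, Tr.gz] at h
      first
      | linear_combination h
      | linear_combination -h
    have E2xx : α*(a1*a7) - γ*(a4*a1) - (a7*a1) = 0 := by
      have h := congrArg Tr.xx T2
      simp [Tr.gx, Tr.gy, Tr.gz] at h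
      first
      | linear_combination h
      | linear_combination -h
    have E3xx : a7*a4 - a4*a7 + (1+γ)*(a4*a4) = 0 := by
      have h := congrArg Tr.xx T3
      simp [Tr.gx, Tr.gy, Tr.gz] at h
      first
      | linear_combination h
      | linear_combination -h
    have E1xy : α*(a1*a5 + α'*(a2*a4) - γ'*α'*(a3*a4)) - (a4*a2 + α'*(a5*a1) - γ'*α'*(a6*a1)) = 0 := by
      have h := congrArg Tr.xy T1
      simp [Tr.gx, Tr.gy, Tr.gz] at h
      first
      | linear_combination h
      | linear_combination -h
    have E2xy : α*(a1*a8 + α'*(a2*a7) - γ'*α'*(a3*a7)) - γ*(a4*a2 + α'*(a5*a1) - γ'*α'*(a6*a1)) - (a7*a2 + α'*(a8*a1) - γ'*α'*(a9*a1)) = 0 := by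
      have h := congrArg Tr.xy T2
      simp [Tr.gx, Tr.gy, Tr.gz] at h
      first
      | linear_combination h
      | linear_combination -h
    have E3xy : (a7*a5 + α'*(a8*a4) - γ'*α'*(a9*a4)) - (a4*a8 + α'*(a5*a7) - γ'*α'*(a6*a7)) + (1+γ)*(a4*a5 + α'*(a5*a4) - γ'*α'*(a6*a4)) = 0 := by
      have h := congrArg Tr.xy T3
      simp [Tr.gx, Tr.gy, Tr.gz] at h
      first
      | linear_combination h
      | linear_combination -h
    have E1xz : α*(a1*a6 + α'*(a3*a4)) - (a4*a3 + α'*(a6*a1)) = 0 := by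
      have h := congrArg Tr.xz T1
      simp [Tr.gx, Tr.gy, Tr.gz] at h
      first
      | linear_combination h
      | linear_combination -h
    have E2xz : α*(a1*a9 + α'*(a3*a7)) - γ*(a4*a3 + α'*(a6*a1)) - (a7*a3 + α'*(a9*a1)) = 0 := by
      have h := congrArg Tr.xz T2
      simp [Tr.gx, Tr.gy, Tr.gz] at h
      first
      | linear_combination h
      | linear_combination -h
    have E3xz : (a7*a6 + α'*(a9*a4)) - (a4*a9 + α'*(a6*a7)) + (1+γ)*(a4*a6 + α'*(a6*a4)) = 0 := by
      have h := congrArg Tr.xz T3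
      simp [Tr.gx, Tr.gy, Tr.gz] at h
      first
      | linear_combination h
      | linear_combination -h
    have E1yy : α*(a2*a5 - (1+γ')*(a3*a5)) - (a5*a2 - (1+γ')*(a6*a2)) = 0 := by
      have h := congrArg Tr.yy T1
      simp [Tr.gx, Tr.gy, Tr.gz] at h
      first
      | linear_combination h
      | linear_combination -h
    have E2yy : α*(a2*a8 - (1+γ')*(a3*a8)) - γ*(a5*a2 - (1+γ')*(a6*a2)) - (a8*a2 - (1+γ')*(a9*a2)) = 0 := by
      have h := congrArg Tr.yy T2
      simp [Tr.gx, Tr.gy, Tr.gz] at h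
      first
      | linear_combination h
      | linear_combination -h
    have E3yy : (a8*a5 - (1+γ')*(a9*a5)) - (a5*a8 - (1+γ')*(a6*a8)) + (1+γ)*(a5*a5 - (1+γ')*(a6*a5)) = 0 := by
      have h := congrArg Tr.yy T3
      simp [Tr.gx, Tr.gy, Tr.gz] at h
      first
      | linear_combination h
      | linear_combination -h
    have E1yz : α*(a2*a6 + a3*a5) - (a5*a3 + a6*a2) = 0 := by
      have h := congrArg Tr.yz T1
      simp [Tr.gx, Tr.gy, Tr.gz] at h
      first
      | linear_combination h
      | linear_combination -h
    have E2yz : α*(a2*a9 + a3*a8) - γ*(a5*a3 + a6*a2) - (a8*a3 + a9*a2) = 0 := by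
      have h := congrArg Tr.yz T2
      simp [Tr.gx, Tr.gy, Tr.gz] at h
      first
      | linear_combination h
      | linear_combination -h
    have E3yz : (a8*a6 + a9*a5) - (a5*a9 + a6*a8) + (1+γ)*(a5*a6 + a6*a5) = 0 := by
      have h := congrArg Tr.yz T3
      simp [Tr.gx, Tr.gy, Tr.gz] at h
      first
      | linear_combination h
      | linear_combination -h
    have E1zz : α*(a3*a6) - (a6*a3) = 0 := by
      have h := congrArg Tr.zz T1
      simp [Tr.gx, Tr.gy, Tr.gz] at h
      first
      | linear_combination h
      | linear_combination -h
    have E2zz : α*(a3*a9) - γ*(a6*a3) - (a9*a3) = 0 := by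
      have h := congrArg Tr.zz T2
      simp [Tr.gx, Tr.gy, Tr.gz] at h
      first
      | linear_combination h
      | linear_combination -h
    have E3zz : a9*a6 - a6*a9 + (1+γ)*(a6*a6) = 0 := by
      have h := congrArg Tr.zz T3
      simp [Tr.gx, Tr.gy, Tr.gz] at h
      first
      | linear_combination h
      | linear_combination -h
    exact key α γ α' γ' a1 a2 a3 a4 a5 a6 a7 a8 a9 p1 p2 p3 q1 q2 q3 r1 r2 r3
      h0 h1 h0' h1' i1 i2 i3 i4 i5 i6 i7 i8 i9 E1xx E1xy E1xz E1yy E1yz E1zz E2xx E2xy E2xz E2yy E2yz E2zz E3xx E3xy E3xz E3yy E3yz E3zz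
  · rintro ⟨rfl, rfl⟩
    exact ⟨AlgEquiv.refl, by
      rw [show (AlgEquiv.refl (R := ℂ) (A₁ := QuadAlg (α' • (X*Y) - Y*X)
          (α' • (X*Z) - γ' • (Y*X) - Z*X) (Z*Y - Y*Z + (1+γ') • (Y*Y)))).toLinearMap
          = LinearMap.id from rfl, Submodule.map_id]⟩
end
end

section
/- (Type TL₁) For α ∈ ℂ with α ≠ 0, let A(α) = ℂ⟨x,y,z⟩/(xy − αyx, xz − α⁻¹zx, α⁻¹zy − αyz + x²). For α, α' ∈ ℂ both nonzero, the algebras A(α) and A(α') are isomorphic as graded algebras if and only if α' = α or α' = α⁻¹. -/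
noncomputable section

/-!
A graded isomorphism `A(α) ≅ A(α')` is a linear change of generators `x, y, z ↦ u, v, w` of
`A(α')` that satisfies the relations of `A(α)`. These relations live in degree two, which we
read off by mapping `A(α')` onto its truncation `ℂ ⊕ ℂ³ ⊕ ℂ⁶` in degrees `≤ 2` (basis
`xy, xz, yy, yz, zy, zz` in degree two). Unless `α' ∈ {α, α⁻¹}`, the coordinate equations
force the `y`-coordinates of `u, v, w` to vanish (or `u = 0`), so `u, v, w` cannot span the
degree-one part. Conversely `x ↦ i x, y ↦ z, z ↦ y` is an isomorphism `A(α) ≅ A(α⁻¹)`.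
-/

section

variable {R V W : Type*} [CommRing R] [AddCommGroup V] [Module R V] [AddCommGroup W] [Module R W]

/-- `R ⊕ V ⊕ W` with `(a, v, w) * (a', v', w') = (a a', a v' + a' v, a w' + a' w + μ v v')`: the
quotient of the tensor algebra of `V` by its part of degree `≥ 3` and by `ker μ` in degree `2`. -/
def QuadTrunc (_μ : V →ₗ[R] V →ₗ[R] W) : Type _ := R × V × W

namespace QuadTrunc

variable {μ : V →ₗ[R] V →ₗ[R] W}

instance : AddCommGroup (QuadTrunc μ) := inferInstanceAs (AddCommGroup (R × V × W))
instance : Module R (QuadTrunc μ) := inferInstanceAs (Module R (R × V × W))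

def mk (a : R) (v : V) (w : W) : QuadTrunc μ := (a, v, w)

def deg0 : QuadTrunc μ →ₗ[R] R := LinearMap.fst R R (V × W)
def deg1 : QuadTrunc μ →ₗ[R] V := LinearMap.fst R V W ∘ₗ LinearMap.snd R R (V × W)
def deg2 : QuadTrunc μ →ₗ[R] W := LinearMap.snd R V W ∘ₗ LinearMap.snd R R (V × W)

@[ext] lemma ext {s t : QuadTrunc μ} (h₀ : deg0 s = deg0 t) (h₁ : deg1 s = deg1 t)
    (h₂ : deg2 s = deg2 t) : s = t :=
  Prod.ext h₀ (Prod.ext h₁ h₂)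

instance : Mul (QuadTrunc μ) where
  mul s t := mk (deg0 s * deg0 t) (deg0 s • deg1 t + deg0 t • deg1 s)
    (deg0 s • deg2 t + deg0 t • deg2 s + μ (deg1 s) (deg1 t))

instance : One (QuadTrunc μ) := ⟨mk 1 0 0⟩

@[simp] lemma deg0_mul (s t : QuadTrunc μ) : deg0 (s * t) = deg0 s * deg0 t := rfl
@[simp] lemma deg1_mul (s t : QuadTrunc μ) :
    deg1 (s * t) = deg0 s • deg1 t + deg0 t • deg1 s := rfl
@[simp] lemma deg2_mul (s t : QuadTrunc μ) :
    deg2 (s * t) = deg0 s • deg2 t + deg0 t • deg2 s + μ (deg1 s) (deg1 t) := rfl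
@[simp] lemma deg0_one : deg0 (1 : QuadTrunc μ) = 1 := rfl
@[simp] lemma deg1_one : deg1 (1 : QuadTrunc μ) = 0 := rfl
@[simp] lemma deg2_one : deg2 (1 : QuadTrunc μ) = 0 := rfl

instance : Ring (QuadTrunc μ) where
  __ := (inferInstance : AddCommGroup (QuadTrunc μ))
  left_distrib s t u := by ext <;> simp <;> first | ring | module
  right_distrib s t u := by ext <;> simp <;> first | ring | module
  zero_mul t := by ext <;> simp
  mul_zero t := by ext <;> simp
  mul_assoc s t u := by ext <;> simp <;> first | ring | module
  one_mul t := by ext <;> simp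
  mul_one t := by ext <;> simp

instance : Algebra R (QuadTrunc μ) :=
  .ofModule (fun r s t => by ext <;> simp <;> first | ring | module)
    (fun r s t => by ext <;> simp <;> first | ring | module)

def ι : V →ₗ[R] QuadTrunc μ := LinearMap.inr R R (V × W) ∘ₗ LinearMap.inl R V W

@[simp] lemma deg0_ι (v : V) : deg0 (ι v : QuadTrunc μ) = 0 := rfl
@[simp] lemma deg1_ι (v : V) : deg1 (ι v : QuadTrunc μ) = v := rfl
@[simp] lemma deg2_ι (v : V) : deg2 (ι v : QuadTrunc μ) = 0 := rfl

lemma ι_injective : Function.Injective (ι : V →ₗ[R] QuadTrunc μ) :=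
  fun v w h => by simpa using congrArg deg1 h

end QuadTrunc

end

lemma lift_X {A : Type*} [Semiring A] [Algebra ℂ A] (f : Fin 3 → A) :
    FreeAlgebra.lift ℂ f X = f 0 := FreeAlgebra.lift_ι_apply f 0

lemma lift_Y {A : Type*} [Semiring A] [Algebra ℂ A] (f : Fin 3 → A) :
    FreeAlgebra.lift ℂ f Y = f 1 := FreeAlgebra.lift_ι_apply f 1

lemma lift_Z {A : Type*} [Semiring A] [Algebra ℂ A] (f : Fin 3 → A) :
    FreeAlgebra.lift ℂ f Z = f 2 := FreeAlgebra.lift_ι_apply f 2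

lemma eq_zero_of_mul_eq_mul_mul {K : Type*} [Field K] {a b t : K} (ha : a ≠ 0) (ht : t ≠ 1)
    (h : a * b = t * (b * a)) : b = 0 := by
  have : b * a * (1 - t) = 0 := by linear_combination h
  simpa [ha, sub_eq_zero, Ne.symm ht] using this

lemma eq_zero_of_twisted_square {K : Type*} [Field K] {α a b c : K} (hab : a * b = α * (b * a))
    (habc : α⁻¹ * (c * b) - α * (b * c) + a * a = 0) : a = 0 := by
  by_cases hα : α = 1
  · subst hα
    exact mul_self_eq_zero.mp (by linear_combination habc)
  · rcases eq_or_ne a 0 with ha | ha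
    · exact ha
    · have hb : b = 0 := eq_zero_of_mul_eq_mul_mul ha hα hab
      exact mul_self_eq_zero.mp (by simpa [hb] using habc)

lemma ne_zero_of_span_eq_top {K V : Type*} [Field K] [AddCommGroup V] [Module K V]
    (hV : 2 < Module.finrank K V) {u v w : V} (h : Submodule.span K {u, v, w} = ⊤) : u ≠ 0 := by
  classical
  rintro rfl
  have hle := (finrank_span_finset_le_card (R := K) ({v, w} : Finset V)).trans Finset.card_le_two
  rw [Finset.coe_pair, Set.finrank, ← Submodule.span_insert_zero, h, finrank_top] at hle
  omega

lemma span_pi_single_fin_three (K : Type*) [Field K] :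
    Submodule.span K {Pi.single 0 1, Pi.single 1 1, Pi.single 2 1} =
      (⊤ : Submodule K (Fin 3 → K)) := by
  rw [← (Pi.basisFun K (Fin 3)).span_eq]
  congr 1
  ext v
  simp [Fin.exists_fin_succ, eq_comm]

namespace QuadAlg

variable {f₁ f₂ f₃ : F3}

def mk (f₁ f₂ f₃ : F3) : F3 →ₐ[ℂ] QuadAlg f₁ f₂ f₃ := RingQuot.mkAlgHom ℂ _

lemma mk_relator {a : F3} (ha : a = f₁ ∨ a = f₂ ∨ a = f₃) : mk f₁ f₂ f₃ a = 0 :=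
  (RingQuot.mkAlgHom_rel ℂ (s := rel3 f₁ f₂ f₃) ⟨ha, rfl⟩).trans (map_zero _)

def lift {A : Type*} [Semiring A] [Algebra ℂ A] (F : F3 →ₐ[ℂ] A)
    (h₁ : F f₁ = 0) (h₂ : F f₂ = 0) (h₃ : F f₃ = 0) : QuadAlg f₁ f₂ f₃ →ₐ[ℂ] A :=
  RingQuot.liftAlgHom ℂ ⟨F, by rintro a b ⟨rfl | rfl | rfl, rfl⟩ <;> simp [*]⟩

@[simp] lemma lift_mk {A : Type*} [Semiring A] [Algebra ℂ A] (F : F3 →ₐ[ℂ] A)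
    (h₁ : F f₁ = 0) (h₂ : F f₂ = 0) (h₃ : F f₃ = 0) (a : F3) :
    lift F h₁ h₂ h₃ (mk f₁ f₂ f₃ a) = F a :=
  RingQuot.liftAlgHom_mkAlgHom_apply _ _ _ _

lemma hom_ext {A : Type*} [Semiring A] [Algebra ℂ A] {φ ψ : QuadAlg f₁ f₂ f₃ →ₐ[ℂ] A}
    (hX : φ (mk f₁ f₂ f₃ X) = ψ (mk f₁ f₂ f₃ X)) (hY : φ (mk f₁ f₂ f₃ Y) = ψ (mk f₁ f₂ f₃ Y))
    (hZ : φ (mk f₁ f₂ f₃ Z) = ψ (mk f₁ f₂ f₃ Z)) : φ = ψ := by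
  refine RingQuot.ringQuot_ext' ℂ _ _ (FreeAlgebra.hom_ext (funext fun i => ?_))
  fin_cases i
  exacts [hX, hY, hZ]

lemma genSpan_eq :
    genSpan f₁ f₂ f₃ = Submodule.span ℂ {mk f₁ f₂ f₃ X, mk f₁ f₂ f₃ Y, mk f₁ f₂ f₃ Z} :=
  rfl

lemma map_genSpan {M : Type*} [AddCommMonoid M] [Module ℂ M] (φ : QuadAlg f₁ f₂ f₃ →ₗ[ℂ] M) :
    (genSpan f₁ f₂ f₃).map φ =
      Submodule.span ℂ {φ (mk f₁ f₂ f₃ X), φ (mk f₁ f₂ f₃ Y), φ (mk f₁ f₂ f₃ Z)} := by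
  simp only [genSpan_eq, Submodule.map_span, Set.image_insert_eq, Set.image_singleton]

end QuadAlg

abbrev TL1 (p : ℂ) : Type :=
  QuadAlg (X*Y - p • (Y*X)) (X*Z - p⁻¹ • (Z*X)) (p⁻¹ • (Z*Y) - p • (Y*Z) + X*X)

namespace TL1

abbrev mk (p : ℂ) : F3 →ₐ[ℂ] TL1 p := QuadAlg.mk _ _ _

variable (p : ℂ)

lemma x_mul_y : mk p X * mk p Y = p • (mk p Y * mk p X) := by
  have h : mk p (X*Y - p • (Y*X)) = 0 := QuadAlg.mk_relator (.inl rfl)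
  simpa [sub_eq_zero] using h

lemma x_mul_z : mk p X * mk p Z = p⁻¹ • (mk p Z * mk p X) := by
  have h : mk p (X*Z - p⁻¹ • (Z*X)) = 0 := QuadAlg.mk_relator (.inr (.inl rfl))
  simpa [sub_eq_zero] using h

lemma x_mul_x : mk p X * mk p X = p • (mk p Y * mk p Z) - p⁻¹ • (mk p Z * mk p Y) := by
  have h : mk p (p⁻¹ • (Z*Y) - p • (Y*Z) + X*X) = 0 := QuadAlg.mk_relator (.inr (.inr rfl))
  simp only [map_add, map_sub, map_smul, map_mul] at h
  linear_combination (norm := module) h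

variable {p}

/-- The target is `TL1 q` for some `q = p⁻¹`, so that the inverse map `TL1 p⁻¹ → TL1 p` is again
a `swap` (`p⁻¹⁻¹` is not definitionally `p`). -/
def swap (q c : ℂ) (hq : q = p⁻¹) (hc : c ^ 2 = -1) : TL1 p →ₐ[ℂ] TL1 q :=
  have hp : p = q⁻¹ := by rw [hq, inv_inv]
  QuadAlg.lift (FreeAlgebra.lift ℂ ![c • mk q X, mk q Z, mk q Y])
    (by
      simp [lift_X, lift_Y, hp]
      linear_combination (norm := module) c • x_mul_z q)
    (by
      simp [lift_X, lift_Z, ← hq]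
      linear_combination (norm := module) c • x_mul_y q)
    (by
      simp [lift_X, lift_Y, lift_Z, ← hq]
      rw [hp]
      linear_combination (norm := module) hc • (mk q X * mk q X) - x_mul_x q)

variable {q c : ℂ} {hq : q = p⁻¹} {hc : c ^ 2 = -1}

@[simp] lemma swap_mk_X : swap q c hq hc (mk p X) = c • mk q X := by simp [swap, lift_X]
@[simp] lemma swap_mk_Y : swap q c hq hc (mk p Y) = mk q Z := by simp [swap, lift_Y]
@[simp] lemma swap_mk_Z : swap q c hq hc (mk p Z) = mk q Y := by simp [swap, lift_Z]

variable (p) in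
def swapEquiv : TL1 p ≃ₐ[ℂ] TL1 p⁻¹ :=
  AlgEquiv.ofAlgHom (swap p⁻¹ Complex.I rfl Complex.I_sq)
    (swap p (-Complex.I) (inv_inv p).symm (by simp))
    (QuadAlg.hom_ext (by simp [smul_smul, Complex.I_mul_I]) (by simp) (by simp))
    (QuadAlg.hom_ext (by simp [smul_smul, Complex.I_mul_I]) (by simp) (by simp))

lemma map_swapEquiv_genSpan :
    (genSpan _ _ _).map (swapEquiv p).toLinearMap = genSpan _ _ _ := by
  rw [QuadAlg.map_genSpan]
  simp only [swapEquiv, AlgEquiv.toLinearMap_apply, AlgEquiv.ofAlgHom_apply, swap_mk_X, swap_mk_Y,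
    swap_mk_Z]
  rw [Submodule.span_insert, Submodule.span_singleton_smul_eq Complex.I_ne_zero.isUnit,
    Set.pair_comm, ← Submodule.span_insert, QuadAlg.genSpan_eq]

/-- The product of two degree-one elements of `A(p)`, in the basis `xy, xz, yy, yz, zy, zz` of its
degree-two part: the relations read `yx = p⁻¹ xy`, `zx = p xz`, `xx = p yz - p⁻¹ zy`. -/
def mulDegOne (p : ℂ) : (Fin 3 → ℂ) →ₗ[ℂ] (Fin 3 → ℂ) →ₗ[ℂ] (Fin 6 → ℂ) :=
  LinearMap.mk₂ ℂ
    (fun v w => ![v 0 * w 1 + p⁻¹ * (v 1 * w 0), v 0 * w 2 + p * (v 2 * w 0), v 1 * w 1,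
      v 1 * w 2 + p * (v 0 * w 0), v 2 * w 1 - p⁻¹ * (v 0 * w 0), v 2 * w 2])
    (fun _ _ _ => by ext i; fin_cases i <;> simp <;> ring)
    (fun _ _ _ => by ext i; fin_cases i <;> simp <;> ring)
    (fun _ _ _ => by ext i; fin_cases i <;> simp <;> ring)
    (fun _ _ _ => by ext i; fin_cases i <;> simp <;> ring)

lemma mulDegOne_apply (p : ℂ) (v w : Fin 3 → ℂ) : mulDegOne p v w =
    ![v 0 * w 1 + p⁻¹ * (v 1 * w 0), v 0 * w 2 + p * (v 2 * w 0), v 1 * w 1,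
      v 1 * w 2 + p * (v 0 * w 0), v 2 * w 1 - p⁻¹ * (v 0 * w 0), v 2 * w 2] := rfl

variable {p : ℂ}

def toTrunc (hp : p ≠ 0) : TL1 p →ₐ[ℂ] QuadTrunc (mulDegOne p) :=
  QuadAlg.lift (FreeAlgebra.lift ℂ fun i => QuadTrunc.ι (Pi.single i 1))
    (by ext i <;> simp [X, Y, mulDegOne_apply]; fin_cases i <;> simp [hp])
    (by ext i <;> simp [X, Z, mulDegOne_apply]; fin_cases i <;> simp [hp])
    (by ext i <;> simp [X, Y, Z, mulDegOne_apply]; fin_cases i <;> simp)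

lemma map_toTrunc_genSpan (hp : p ≠ 0) :
    (genSpan _ _ _).map (toTrunc hp).toLinearMap = LinearMap.range QuadTrunc.ι := by
  rw [QuadAlg.map_genSpan, LinearMap.range_eq_map, ← span_pi_single_fin_three ℂ,
    Submodule.map_span]
  simp [toTrunc, lift_X, lift_Y, lift_Z, Set.image_insert_eq]

variable {α β : ℂ}

theorem exists_degOne_of_map_genSpan (hβ : β ≠ 0) (e : TL1 α ≃ₐ[ℂ] TL1 β)
    (he : (genSpan _ _ _).map e.toLinearMap = genSpan _ _ _) :
    ∃ u v w : Fin 3 → ℂ, Submodule.span ℂ {u, v, w} = ⊤ ∧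
      mulDegOne β u v = α • mulDegOne β v u ∧ mulDegOne β u w = α⁻¹ • mulDegOne β w u ∧
      α⁻¹ • mulDegOne β w v - α • mulDegOne β v w + mulDegOne β u u = 0 := by
  set Φ := (toTrunc hβ).comp (e.toAlgHom.comp (mk α))
  have hspan :
      Submodule.span ℂ {Φ X, Φ Y, Φ Z} = LinearMap.range (QuadTrunc.ι (μ := mulDegOne β)) := by
    rw [← map_toTrunc_genSpan hβ, ← he, ← Submodule.map_comp, QuadAlg.map_genSpan]
    rfl
  have hmem (t) (ht : t ∈ ({Φ X, Φ Y, Φ Z} : Set _)) : t ∈ LinearMap.range QuadTrunc.ι :=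
    hspan ▸ Submodule.subset_span ht
  obtain ⟨u, hu⟩ := hmem (Φ X) (by simp)
  obtain ⟨v, hv⟩ := hmem (Φ Y) (by simp)
  obtain ⟨w, hw⟩ := hmem (Φ Z) (by simp)
  have hrel {a : F3} (ha : mk α a = 0) : QuadTrunc.deg2 (Φ a) = 0 := by
    simp [Φ, ha]
  refine ⟨u, v, w, ?_, ?_, ?_, ?_⟩
  · apply Submodule.map_injective_of_injective (QuadTrunc.ι_injective (μ := mulDegOne β))
    rw [Submodule.map_span, ← LinearMap.range_eq_map, ← hspan]
    simp [Set.image_insert_eq, hu, hv, hw]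
  · have h := hrel (QuadAlg.mk_relator (.inl rfl))
    simpa [← hu, ← hv, sub_eq_zero] using h
  · have h := hrel (QuadAlg.mk_relator (.inr (.inl rfl)))
    simpa [← hu, ← hw, sub_eq_zero] using h
  · have h := hrel (QuadAlg.mk_relator (.inr (.inr rfl)))
    simpa [← hu, ← hv, ← hw] using h

lemma coord_one_eq_zero_of_relations {u v w : Fin 3 → ℂ} (hβα : β ≠ α) (hβα' : β ≠ α⁻¹)
    (huv : mulDegOne β u v = α • mulDegOne β v u) (huw : mulDegOne β u w = α⁻¹ • mulDegOne β w u)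
    (huu : α⁻¹ • mulDegOne β w v - α • mulDegOne β v w + mulDegOne β u u = 0) :
    u 1 = 0 ∧ (u ≠ 0 → v 1 = 0 ∧ w 1 = 0) := by
  -- the components along `xy`, `yy`, `zz` suffice
  have huv₀ := congrFun huv 0
  have huv₂ := congrFun huv 2
  have huv₅ := congrFun huv 5
  have huw₀ := congrFun huw 0
  have huu₂ := congrFun huu 2
  have huu₅ := congrFun huu 5
  simp [mulDegOne_apply] at huv₀ huv₂ huv₅ huw₀ huu₂ huu₅
  have hu₁ : u 1 = 0 := eq_zero_of_twisted_square huv₂ huu₂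
  have hu₂ : u 2 = 0 := eq_zero_of_twisted_square huv₅ huu₅
  refine ⟨hu₁, fun hu => ?_⟩
  have hu₀ : u 0 ≠ 0 := fun hu₀ => hu (by ext i; fin_cases i <;> assumption)
  simp only [hu₁, zero_mul, mul_zero, add_zero, zero_add] at huv₀ huw₀
  refine ⟨eq_zero_of_mul_eq_mul_mul (t := α * β⁻¹) hu₀ ?_ (by linear_combination huv₀),
    eq_zero_of_mul_eq_mul_mul (t := α⁻¹ * β⁻¹) hu₀ ?_ (by linear_combination huw₀)⟩
  · intro h
    have hβ : β ≠ 0 := by rintro rfl; simp at h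
    exact hβα ((mul_inv_eq_one₀ hβ).mp h).symm
  · intro h
    rw [← mul_inv, inv_eq_one] at h
    exact hβα' (eq_inv_of_mul_eq_one_right h)

theorem eq_or_eq_inv_of_map_genSpan (hβ : β ≠ 0) (e : TL1 α ≃ₐ[ℂ] TL1 β)
    (he : (genSpan _ _ _).map e.toLinearMap = genSpan _ _ _) : β = α ∨ β = α⁻¹ := by
  obtain ⟨u, v, w, hspan, huv, huw, huu⟩ := exists_degOne_of_map_genSpan hβ e he
  by_contra! hne
  obtain ⟨hu₁, hvw⟩ := coord_one_eq_zero_of_relations hne.1 hne.2 huv huw huu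
  obtain ⟨hv₁, hw₁⟩ := hvw (ne_zero_of_span_eq_top (by simp) hspan)
  have hle : Submodule.span ℂ {u, v, w} ≤ LinearMap.ker (LinearMap.proj 1) := by
    simp [Submodule.span_le, Set.insert_subset_iff, hu₁, hv₁, hw₁]
  have h1 := hle (hspan ▸ Submodule.mem_top (x := Pi.single (1 : Fin 3) (1 : ℂ)))
  simp at h1

end TL1

theorem typeTL1_iso_iff_general
    (α α' : ℂ)
    (h' : α' ≠ 0)
    : GrIso
      (X*Y - α • (Y*X))
      (X*Z - α⁻¹ • (Z*X))
      (α⁻¹ • (Z*Y) - α • (Y*Z) + X*X)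
      (X*Y - α' • (Y*X))
      (X*Z - α'⁻¹ • (Z*X))
      (α'⁻¹ • (Z*Y) - α' • (Y*Z) + X*X)
      ↔
      (α' = α ∨ α' = α⁻¹) := by
  constructor
  · rintro ⟨e, he⟩
    exact TL1.eq_or_eq_inv_of_map_genSpan h' e he
  · rintro (rfl | rfl)
    · exact ⟨AlgEquiv.refl, Submodule.map_id _⟩
    · exact ⟨TL1.swapEquiv α, TL1.map_swapEquiv_genSpan⟩

theorem typeTL1_iso_iff
    (α α' : ℂ)
    (h : α ≠ 0)
    (h' : α' ≠ 0)
    : GrIso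
      (X*Y - α • (Y*X))
      (X*Z - α⁻¹ • (Z*X))
      (α⁻¹ • (Z*Y) - α • (Y*Z) + X*X)
      (X*Y - α' • (Y*X))
      (X*Z - α'⁻¹ • (Z*X))
      (α'⁻¹ • (Z*Y) - α' • (Y*Z) + X*X)
      ↔
      (α' = α ∨ α' = α⁻¹) :=
  typeTL1_iso_iff_general α α' h'
end
end

section
/- (Type TL₂) For β ∈ ℂ, let A(β) = ℂ⟨x,y,z⟩/(xy − yx − βx², xz − zx − yx, zy − yz − βxz + x² + y²). For β, β' ∈ ℂ, the algebras A(β) and A(β') are isomorphic as graded algebras if and only if β' = β or β' = −β. -/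
noncomputable section

/-!
A graded isomorphism `A β ≅ A β'` restricts to an automorphism `g` of the degree-one part `ℂ³`
with `(g ⊗ g)(R_β) ⊆ R_β'`, where `R_β ⊆ ℂ³ ⊗ ℂ³` is the span of the relations. Dually, every
bilinear form `B` on `ℂ³` annihilating `R_β'` annihilates `(g ⊗ g)(R_β)`; such a `B` is detected
by the representation of `A β'` on the truncation `ℂ ⊕ ℂ³ ⊕ ℂ` whose product in degree two is `B`.
Four suitable forms give polynomial equations in the entries of `g` which, together with
`det g ≠ 0`, force `β'² = β²`. Conversely, `x ↦ -x, y ↦ y, z ↦ z` carries the relations of `A β`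
to (multiples of) those of `A (-β)`.
-/

namespace TL2

section Truncation

variable {R V W : Type*} [CommRing R] [AddCommGroup V] [Module R V] [AddCommGroup W] [Module R W]

/-- Left multiplication by `v ∈ V` in the truncated algebra `R ⊕ V ⊕ W` whose only nonzero
product of positive-degree elements is `B : V × V → W`. Representing it inside `Module.End`
makes associativity free. -/
def lmul₁ (B : V →ₗ[R] V →ₗ[R] W) : V →ₗ[R] Module.End R (R × V × W) :=
  LinearMap.mk₂ R (fun v p => (0, p.1 • v, B v p.2.1))
    (fun v v' p => by simp [smul_add]) (fun c v p => by simp [smul_comm c p.1])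
    (fun v p q => by simp [add_smul]) (fun c v p => by simp [mul_smul])

def lmul₂ : W →ₗ[R] Module.End R (R × V × W) :=
  LinearMap.mk₂ R (fun c p => (0, 0, p.1 • c))
    (fun c c' p => by simp [smul_add]) (fun c v p => by simp [smul_comm c p.1])
    (fun v p q => by simp [add_smul]) (fun c v p => by simp [mul_smul])

@[simp] lemma lmul₁_apply (B : V →ₗ[R] V →ₗ[R] W) (v : V) (p : R × V × W) :
    lmul₁ B v p = (0, p.1 • v, B v p.2.1) := rfl

@[simp] lemma lmul₂_apply (c : W) (p : R × V × W) :
    (lmul₂ c : Module.End R (R × V × W)) p = (0, 0, p.1 • c) := rfl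

lemma lmul₁_mul_lmul₁ (B : V →ₗ[R] V →ₗ[R] W) (u v : V) :
    lmul₁ B u * lmul₁ B v = lmul₂ (B u v) :=
  LinearMap.ext fun p => by simp

lemma lmul₂_injective : Function.Injective (lmul₂ : W →ₗ[R] Module.End R (R × V × W)) :=
  fun c d h => by simpa using congr($h (1, 0, 0))

end Truncation

section Relations

variable {V W : Type*} [AddCommGroup V] [Module ℂ V] [AddCommGroup W] [Module ℂ W]

def f₁ (β : ℂ) : F3 := X*Y - Y*X - β • (X*X)
def f₂ : F3 := X*Z - Z*X - Y*X
def f₃ (β : ℂ) : F3 := Z*Y - Y*Z - β • (X*Z) + X*X + Y*Y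

def truncLift (B : V →ₗ[ℂ] V →ₗ[ℂ] W) (v : Fin 3 → V) : F3 →ₐ[ℂ] Module.End ℂ (ℂ × V × W) :=
  FreeAlgebra.lift ℂ (lmul₁ B ∘ v)

/-- The relations of `A β` hold for the images `v 0, v 1, v 2` of `x, y, z` in a truncated
algebra whose product of degree-one elements is `B`. -/
def RelationsHold (β : ℂ) (B : V →ₗ[ℂ] V →ₗ[ℂ] W) (v : Fin 3 → V) : Prop :=
  B (v 0) (v 1) - B (v 1) (v 0) - β • B (v 0) (v 0) = 0 ∧
  B (v 0) (v 2) - B (v 2) (v 0) - B (v 1) (v 0) = 0 ∧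
  B (v 2) (v 1) - B (v 1) (v 2) - β • B (v 0) (v 2) + B (v 0) (v 0) + B (v 1) (v 1) = 0

lemma truncLift_relators_eq_zero_iff (β : ℂ) (B : V →ₗ[ℂ] V →ₗ[ℂ] W) (v : Fin 3 → V) :
    (truncLift B v (f₁ β) = 0 ∧ truncLift B v f₂ = 0 ∧ truncLift B v (f₃ β) = 0) ↔
      RelationsHold β B v := by
  simp only [truncLift, f₁, f₂, f₃, X, Y, Z, map_add, map_sub, map_mul, map_smul,
    FreeAlgebra.lift_ι_apply, Function.comp_apply, lmul₁_mul_lmul₁]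
  simp only [← map_sub, ← map_smul, ← map_add, map_eq_zero_iff _ lmul₂_injective, RelationsHold]

end Relations

variable {W : Type*} [AddCommGroup W] [Module ℂ W]

abbrev A (β : ℂ) : Type := QuadAlg (f₁ β) f₂ (f₃ β)

abbrev pr (β : ℂ) : F3 →ₐ[ℂ] A β := RingQuot.mkAlgHom ℂ (rel3 (f₁ β) f₂ (f₃ β))

abbrev degOne (β : ℂ) : Submodule ℂ (A β) := genSpan (f₁ β) f₂ (f₃ β)

lemma pr_relators (β : ℂ) : pr β (f₁ β) = 0 ∧ pr β f₂ = 0 ∧ pr β (f₃ β) = 0 := by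
  refine ⟨?_, ?_, ?_⟩ <;> rw [← map_zero (pr β)] <;> exact RingQuot.mkAlgHom_rel ℂ ⟨by simp, rfl⟩

def truncRep (β : ℂ) (B : (Fin 3 → ℂ) →ₗ[ℂ] (Fin 3 → ℂ) →ₗ[ℂ] W)
    (hB : RelationsHold β B (Pi.basisFun ℂ (Fin 3))) :
    A β →ₐ[ℂ] Module.End ℂ (ℂ × (Fin 3 → ℂ) × W) :=
  RingQuot.liftAlgHom ℂ ⟨truncLift B (Pi.basisFun ℂ (Fin 3)), by
    have h := (truncLift_relators_eq_zero_iff β B _).2 hB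
    rintro _ _ ⟨(rfl | rfl | rfl), rfl⟩ <;> simp [h]⟩

lemma truncRep_pr (β : ℂ) (B : (Fin 3 → ℂ) →ₗ[ℂ] (Fin 3 → ℂ) →ₗ[ℂ] W)
    (hB : RelationsHold β B (Pi.basisFun ℂ (Fin 3))) (f : F3) :
    truncRep β B hB (pr β f) = truncLift B (Pi.basisFun ℂ (Fin 3)) f :=
  RingQuot.liftAlgHom_mkAlgHom_apply ℂ _ _ _

def ι (β : ℂ) : (Fin 3 → ℂ) →ₗ[ℂ] A β := Fintype.linearCombination ℂ (pr β ∘ FreeAlgebra.ι ℂ)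

lemma range_ι (β : ℂ) : LinearMap.range (ι β) = degOne β := by
  rw [ι, Fintype.range_linearCombination, degOne, genSpan]
  congr 1
  ext a
  simp [Fin.exists_fin_succ, X, Y, Z, eq_comm]

lemma ι_single (β : ℂ) (i : Fin 3) : ι β (Pi.single i 1) = pr β (FreeAlgebra.ι ℂ i) := by
  simp [ι, Fintype.linearCombination_apply_single]

lemma truncRep_comp_ι (β : ℂ) (B : (Fin 3 → ℂ) →ₗ[ℂ] (Fin 3 → ℂ) →ₗ[ℂ] W)
    (hB : RelationsHold β B (Pi.basisFun ℂ (Fin 3))) :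
    (truncRep β B hB).toLinearMap ∘ₗ ι β = lmul₁ B :=
  (Pi.basisFun ℂ (Fin 3)).ext fun i => by simp [ι_single, truncRep_pr, truncLift]

lemma ι_injective (β : ℂ) : Function.Injective (ι β) := by
  have hB : RelationsHold β (0 : (Fin 3 → ℂ) →ₗ[ℂ] (Fin 3 → ℂ) →ₗ[ℂ] ℂ)
      (Pi.basisFun ℂ (Fin 3)) := by
    simp [RelationsHold]
  refine Function.LeftInverse.injective
    (g := fun a => (truncRep β 0 hB a (1, 0, 0)).2.1) fun v => ?_
  simpa using congrArg (·.2.1) congr(($(truncRep_comp_ι β 0 hB) v) (1, 0, 0))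

/-- Dual form of `(g ⊗ g)(R_β) ⊆ R_β'` for the linear map `g` of `ℂ³` sending the standard
basis to `v`. -/
def MapsRelations (β β' : ℂ) (v : Fin 3 → Fin 3 → ℂ) : Prop :=
  ∀ B : (Fin 3 → ℂ) →ₗ[ℂ] (Fin 3 → ℂ) →ₗ[ℂ] ℂ,
    RelationsHold β' B (Pi.basisFun ℂ (Fin 3)) → RelationsHold β B v

lemma exists_mapsRelations_of_map_degOne {β β' : ℂ} (e : A β ≃ₐ[ℂ] A β')
    (he : Submodule.map e.toLinearMap (degOne β) = degOne β') :
    ∃ v : Fin 3 → Fin 3 → ℂ, LinearIndependent ℂ v ∧ MapsRelations β β' v := by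
  have hmem : ∀ i, e (ι β (Pi.single i 1)) ∈ LinearMap.range (ι β') := fun i => by
    rw [range_ι, ← he, ← range_ι]
    exact Submodule.mem_map_of_mem (LinearMap.mem_range_self _ _)
  choose v hv using hmem
  refine ⟨v, ?_, fun B hB => ?_⟩
  · have hinj : Function.Injective (e.toLinearMap ∘ₗ ι β) := e.injective.comp (ι_injective β)
    refine LinearIndependent.of_comp (ι β') ?_
    have hcomp : ι β' ∘ v = (e.toLinearMap ∘ₗ ι β) ∘ Pi.basisFun ℂ (Fin 3) := by
      ext i : 1
      simp [hv]
    rw [hcomp]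
    exact (Pi.basisFun ℂ (Fin 3)).linearIndependent.map' _ (LinearMap.ker_eq_bot.2 hinj)
  · have hcomp : ((truncRep β' B hB).comp e.toAlgHom).comp (pr β) = truncLift B v := by
      refine FreeAlgebra.hom_ext (funext fun i => ?_)
      change truncRep β' B hB (e (pr β (FreeAlgebra.ι ℂ i))) = truncLift B v (FreeAlgebra.ι ℂ i)
      rw [← ι_single, ← hv, truncLift, FreeAlgebra.lift_ι_apply]
      exact congr($(truncRep_comp_ι β' B hB) (v i))
    obtain ⟨p₁, p₂, p₃⟩ := pr_relators β
    rw [← truncLift_relators_eq_zero_iff, ← hcomp]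
    simp [p₁, p₂, p₃]

lemma det_ne_zero_of_linearIndependent {v : Fin 3 → Fin 3 → ℂ} (hv : LinearIndependent ℂ v) :
    v 0 0 * v 1 1 * v 2 2 - v 0 0 * v 1 2 * v 2 1 - v 0 1 * v 1 0 * v 2 2 +
      v 0 1 * v 1 2 * v 2 0 + v 0 2 * v 1 0 * v 2 1 - v 0 2 * v 1 1 * v 2 0 ≠ 0 := by
  have : (Matrix.of v).det ≠ 0 := ((Matrix.isUnit_iff_isUnit_det _).1
    (Matrix.linearIndependent_rows_iff_isUnit.1 hv)).ne_zero
  rwa [Matrix.det_fin_three] at this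

-- Each matrix below is a bilinear form annihilating the relations of `A β'`.

/-- For `β = 0` the forms make the images of `x` and `y` parallel unless `β' = 0`. -/
lemma eq_zero_of_mapsRelations_zero {β' : ℂ} {v : Fin 3 → Fin 3 → ℂ}
    (hv : LinearIndependent ℂ v) (h : MapsRelations 0 β' v) : β' = 0 := by
  obtain ⟨hB, -, -⟩ := h (Matrix.toLinearMap₂' ℂ !![0, 0, 0; 0, 1, 1; 0, 0, 0]) (by
    simp [RelationsHold, Matrix.toLinearMap₂'_apply, Pi.single_apply])
  obtain ⟨hC, -, -⟩ := h (Matrix.toLinearMap₂' ℂ !![1, β', 0; 0, -1, 0; 0, 0, 0]) (by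
    simp [RelationsHold, Matrix.toLinearMap₂'_apply, Pi.single_apply])
  obtain ⟨hD, -, -⟩ := h (Matrix.toLinearMap₂' ℂ !![0, 1, 0; 1, 0, 0; -1, 0, 0]) (by
    simp [RelationsHold, Matrix.toLinearMap₂'_apply, Pi.single_apply])
  simp only [Fin.isValue, Matrix.toLinearMap₂'_apply, Matrix.of_apply, Matrix.cons_val',
    Matrix.cons_val_fin_one, smul_eq_mul, Fin.sum_univ_three, Matrix.cons_val_zero,
    Matrix.cons_val_one, Matrix.cons_val, mul_zero, add_zero, mul_one, zero_add, mul_neg,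
    zero_mul, sub_zero] at hB hC hD
  have : β' * (v 0 0 * v 1 1 * v 2 2 - v 0 0 * v 1 2 * v 2 1 - v 0 1 * v 1 0 * v 2 2 +
      v 0 1 * v 1 2 * v 2 0 + v 0 2 * v 1 0 * v 2 1 - v 0 2 * v 1 1 * v 2 0) = 0 := by
    linear_combination v 2 2 * hC - β' * v 2 1 * hD + β' * v 2 0 * hB
  exact (mul_eq_zero.1 this).resolve_right (det_ne_zero_of_linearIndependent hv)

lemma sq_eq_sq_of_mapsRelations_of_ne_zero {β β' : ℂ} {v : Fin 3 → Fin 3 → ℂ}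
    (hv : LinearIndependent ℂ v) (hβ : β ≠ 0) (h : MapsRelations β β' v) : β' ^ 2 = β ^ 2 := by
  obtain ⟨hA₁, -, hA₃⟩ := h (Matrix.toLinearMap₂' ℂ !![0, 0, 0; 0, 0, 0; 0, 0, 1]) (by
    simp [RelationsHold, Matrix.toLinearMap₂'_apply, Pi.single_apply])
  obtain ⟨hB₁, -, -⟩ := h (Matrix.toLinearMap₂' ℂ !![0, 0, 0; 0, 1, 1; 0, 0, 0]) (by
    simp [RelationsHold, Matrix.toLinearMap₂'_apply, Pi.single_apply])
  obtain ⟨hC₁, hC₂, hC₃⟩ := h (Matrix.toLinearMap₂' ℂ !![1, β', 0; 0, -1, 0; 0, 0, 0]) (by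
    simp [RelationsHold, Matrix.toLinearMap₂'_apply, Pi.single_apply])
  simp only [Fin.isValue, Matrix.toLinearMap₂'_apply, Matrix.of_apply, Matrix.cons_val',
    Matrix.cons_val_fin_one, smul_eq_mul, Fin.sum_univ_three, Matrix.cons_val_zero,
    Matrix.cons_val_one, Matrix.cons_val, mul_zero, add_zero, mul_one, zero_add, mul_neg]
    at hA₁ hA₃ hB₁ hC₁ hC₂ hC₃
  have hx₂ : v 0 2 = 0 := by
    have : β * v 0 2 ^ 2 = 0 := by linear_combination -hA₁
    simpa [hβ] using this
  have hy₂ : v 1 2 = 0 := by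
    have : v 1 2 ^ 2 = 0 := by linear_combination hA₃ + (β * v 2 2 - v 0 2) * hx₂
    simpa using this
  have hx₁ : v 0 1 = 0 := by
    have : β * v 0 1 ^ 2 = 0 := by
      linear_combination -hB₁ + v 0 1 * hy₂ - (v 1 1 + β * v 0 1) * hx₂
    simpa [hβ] using this
  have hx₀ : v 0 0 ≠ 0 := fun hx₀ =>
    det_ne_zero_of_linearIndependent hv (by rw [hx₀, hx₁, hx₂]; ring)
  simp only [hx₁] at hC₁ hC₂ hC₃
  have hy₁ : β' * v 1 1 = β * v 0 0 := mul_left_cancel₀ hx₀ (by linear_combination hC₁)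
  have hy₀ : v 1 0 = β' * v 2 1 := mul_left_cancel₀ hx₀ (by linear_combination -hC₂)
  have hx₀y₁ : v 0 0 ^ 2 = v 1 1 ^ 2 := by
    linear_combination hC₃ - (v 2 0 + v 1 0) * hy₁ - (v 1 0 + β * v 0 0) * hy₀
  refine mul_right_cancel₀ (pow_ne_zero 2 hx₀) ?_
  linear_combination β' ^ 2 * hx₀y₁ + (β' * v 1 1 + β * v 0 0) * hy₁

lemma sq_eq_sq_of_mapsRelations {β β' : ℂ} {v : Fin 3 → Fin 3 → ℂ}
    (hv : LinearIndependent ℂ v) (h : MapsRelations β β' v) : β' ^ 2 = β ^ 2 := by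
  rcases eq_or_ne β 0 with rfl | hβ
  · simp [eq_zero_of_mapsRelations_zero hv h]
  · exact sq_eq_sq_of_mapsRelations_of_ne_zero hv hβ h

def negX : F3 →ₐ[ℂ] F3 := FreeAlgebra.lift ℂ ![-X, Y, Z]

@[simp] lemma negX_X : negX X = -X := FreeAlgebra.lift_ι_apply _ _
@[simp] lemma negX_Y : negX Y = Y := FreeAlgebra.lift_ι_apply _ _
@[simp] lemma negX_Z : negX Z = Z := FreeAlgebra.lift_ι_apply _ _

lemma negX_relators (β : ℂ) :
    negX (f₁ β) = -f₁ (-β) ∧ negX f₂ = -f₂ ∧ negX (f₃ β) = f₃ (-β) := by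
  refine ⟨?_, ?_, ?_⟩ <;> simp only [f₁, f₂, f₃, map_add, map_sub, map_mul, map_smul, negX_X,
    negX_Y, negX_Z, neg_mul, mul_neg, neg_neg] <;> module

def negXHom {β β' : ℂ} (h : β' = -β) : A β →ₐ[ℂ] A β' :=
  RingQuot.liftAlgHom ℂ ⟨(pr β').comp negX, by
    subst h
    obtain ⟨h₁, h₂, h₃⟩ := negX_relators β
    obtain ⟨p₁, p₂, p₃⟩ := pr_relators (-β)
    rintro _ _ ⟨(rfl | rfl | rfl), rfl⟩ <;> simp [h₁, h₂, h₃, p₁, p₂, p₃]⟩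

lemma negXHom_pr {β β' : ℂ} (h : β' = -β) (f : F3) : negXHom h (pr β f) = pr β' (negX f) :=
  RingQuot.liftAlgHom_mkAlgHom_apply ℂ _ _ _

lemma negX_comp_negX : negX.comp negX = AlgHom.id ℂ F3 :=
  FreeAlgebra.hom_ext (funext fun i => by fin_cases i <;> simp [negX, X, Y, Z])

lemma negXHom_comp_negXHom {β β' : ℂ} (h : β' = -β) (h' : β = -β') :
    (negXHom h').comp (negXHom h) = AlgHom.id ℂ (A β) :=
  RingQuot.ringQuot_ext' ℂ _ _ (AlgHom.ext fun f => by
    simp [negXHom_pr, ← AlgHom.comp_apply negX negX, negX_comp_negX])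

def negXEquiv (β : ℂ) : A β ≃ₐ[ℂ] A (-β) :=
  AlgEquiv.ofAlgHom (negXHom rfl) (negXHom (neg_neg β).symm)
    (negXHom_comp_negXHom _ _) (negXHom_comp_negXHom _ _)

lemma negXEquiv_pr (β : ℂ) (f : F3) : negXEquiv β (pr β f) = pr (-β) (negX f) :=
  negXHom_pr rfl f

lemma map_negXEquiv_degOne (β : ℂ) :
    Submodule.map (negXEquiv β).toLinearMap (degOne β) = degOne (-β) := by
  simp only [degOne, genSpan, Submodule.map_span, Set.image_insert_eq, Set.image_singleton]
  simp only [AlgEquiv.toLinearMap_apply, negXEquiv_pr, negX_X, map_neg, negX_Y, negX_Z]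
  rw [Submodule.span_insert, ← Set.neg_singleton, Submodule.span_neg, ← Submodule.span_insert]

end TL2

theorem typeTL2_iso_iff
    (β β' : ℂ)
    : GrIso
      (X*Y - Y*X - β • (X*X))
      (X*Z - Z*X - Y*X)
      (Z*Y - Y*Z - β • (X*Z) + X*X + Y*Y)
      (X*Y - Y*X - β' • (X*X))
      (X*Z - Z*X - Y*X)
      (Z*Y - Y*Z - β' • (X*Z) + X*X + Y*Y)
      ↔
      (β' = β ∨ β' = -β) := by
  constructor
  · rintro ⟨e, he⟩
    obtain ⟨v, hv, hrel⟩ := TL2.exists_mapsRelations_of_map_degOne e he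
    exact sq_eq_sq_iff_eq_or_eq_neg.1 (TL2.sq_eq_sq_of_mapsRelations hv hrel)
  · rintro (rfl | rfl)
    · exact ⟨AlgEquiv.refl, Submodule.map_id _⟩
    · exact ⟨TL2.negXEquiv β, TL2.map_negXEquiv_degOne β⟩
end
end

section
/- Let ε ∈ ℂ be a primitive third root of unity. Then for all a, b, c ∈ ℂ: (aε² + bε + c)³ + (aε + bε² + c)³ + (a + b + c)³ − 3(1+√3)·(aε² + bε + c)(aε + bε² + c)(a + b + c) = −3√3·(a³ + b³ + c³ − 3(1+√3)·abc). Consequently, the map (a:b:c) ↦ (aε² + bε + c : aε + bε² + c : a + b + c) sends the Hesse cubic E_{1+√3} = { (a:b:c) ∈ ℙ² | a³ + b³ + c³ = 3(1+√3)abc } into itself. -/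
/-- For a primitive third root of unity `ε` and a square root `s` of `3`, the identity
`(aε² + bε + c)³ + (aε + bε² + c)³ + (a+b+c)³ − 3(1+s)(aε² + bε + c)(aε + bε² + c)(a+b+c)
  = −3s(a³ + b³ + c³ − 3(1+s)abc)`
holds; consequently the linear change of coordinates
`(a:b:c) ↦ (aε² + bε + c : aε + bε² + c : a+b+c)` sends the Hesse cubic
`E_{1+√3} = 𝒱(x³ + y³ + z³ − 3(1+√3)xyz) ⊆ ℙ²` into itself. -/
theorem hesse_tau_identity (ε s : ℂ) (hε : IsPrimitiveRoot ε 3) (hs : s ^ 2 = 3) :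
    (∀ a b c : ℂ,
      (a*ε^2 + b*ε + c)^3 + (a*ε + b*ε^2 + c)^3 + (a + b + c)^3
          - 3*(1 + s) * ((a*ε^2 + b*ε + c) * (a*ε + b*ε^2 + c) * (a + b + c))
        = -3*s * (a^3 + b^3 + c^3 - 3*(1 + s)*(a*b*c))) ∧
    (∀ a b c : ℂ, ¬(a = 0 ∧ b = 0 ∧ c = 0) →
      a^3 + b^3 + c^3 = 3*(1 + s)*(a*b*c) →
      ¬(a*ε^2 + b*ε + c = 0 ∧ a*ε + b*ε^2 + c = 0 ∧ a + b + c = 0) ∧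
        (a*ε^2 + b*ε + c)^3 + (a*ε + b*ε^2 + c)^3 + (a + b + c)^3
          = 3*(1 + s) * ((a*ε^2 + b*ε + c) * (a*ε + b*ε^2 + c) * (a + b + c))) := by

  have h3 : ε ^ 3 = 1 := hε.pow_eq_one
  have hne1 : ε ≠ 1 := hε.ne_one (by norm_num)
  have h1 : ε ^ 2 + ε + 1 = 0 := by
    have hf : (ε - 1) * (ε ^ 2 + ε + 1) = 0 := by linear_combination h3
    rcases mul_eq_zero.mp hf with h | h
    · exact absurd (sub_eq_zero.mp h) hne1
    · exact h
  have hid : ∀ a b c : ℂ,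
      (a*ε^2 + b*ε + c)^3 + (a*ε + b*ε^2 + c)^3 + (a + b + c)^3
          - 3*(1 + s) * ((a*ε^2 + b*ε + c) * (a*ε + b*ε^2 + c) * (a + b + c))
        = -3*s * (a^3 + b^3 + c^3 - 3*(1 + s)*(a*b*c)) := by
    intro a b c
    linear_combination ((-3:ℂ)*b*c^2*s + (3:ℂ)*b^2*c + (-6:ℂ)*b^2*c*ε + (-3:ℂ)*b^2*c*ε*s + (3:ℂ)*b^2*c*ε^2 + (1:ℂ)*b^3 + (3:ℂ)*b^3*s + (-1:ℂ)*b^3*ε + (-3:ℂ)*b^3*ε*s + (-1:ℂ)*b^3*ε^3 + (1:ℂ)*b^3*ε^4 + (-3:ℂ)*a*c^2*s + (-21:ℂ)*a*b*c + (-9:ℂ)*a*b*c*s + (15:ℂ)*a*b*c*ε + (3:ℂ)*a*b*c*ε*s + (-3:ℂ)*a*b*c*ε^2 + (-3:ℂ)*a*b*c*ε^2*s + (3:ℂ)*a*b^2 + (-3:ℂ)*a*b^2*ε + (-3:ℂ)*a*b^2*ε^2 + (-3:ℂ)*a*b^2*ε^2*s + (3:ℂ)*a*b^2*ε^3 + (3:ℂ)*a^2*c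 + (-6:ℂ)*a^2*c*ε + (-3:ℂ)*a^2*c*ε*s + (3:ℂ)*a^2*c*ε^2 + (3:ℂ)*a^2*b + (-3:ℂ)*a^2*b*ε + (-3:ℂ)*a^2*b*ε^2 + (-3:ℂ)*a^2*b*ε^2*s + (3:ℂ)*a^2*b*ε^3 + (1:ℂ)*a^3 + (3:ℂ)*a^3*s + (-1:ℂ)*a^3*ε + (-3:ℂ)*a^3*ε*s + (-1:ℂ)*a^3*ε^3 + (1:ℂ)*a^3*ε^4) * h1 + ((-9:ℂ)*a*b*c) * hs
  refine ⟨hid, fun a b c h0 heq => ⟨?_, by linear_combination hid a b c - 3*s*heq⟩⟩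
  rintro ⟨hx, hy, hz⟩
  have hεne : ε ≠ 0 := fun h => by simp [h] at h3
  have hεε : ε ^ 2 - ε ≠ 0 := by
    intro h
    rcases mul_eq_zero.mp (show ε * (ε - 1) = 0 by linear_combination h) with h' | h'
    · exact hεne h'
    · exact hne1 (sub_eq_zero.mp h')
  have hc : c = 0 := by linear_combination (hx + hy + hz)/3 - ((a+b)/3)*h1
  have hab : a + b = 0 := by linear_combination hz - hc
  have ha : a = 0 := by
    have h' : a * (ε ^ 2 - ε) = 0 := by linear_combination hx - ε*hab - hc
    rcases mul_eq_zero.mp h' with h'' | h''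
    · exact h''
    · exact absurd h'' hεε
  exact h0 ⟨ha, by linear_combination hab - ha, hc⟩
end
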